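/- arXiv:1911.07604 — 11 statements merged into one kernel-verified Lean document; each statement's English description precedes it below -/
import Mathlib

section
/- For every natural number n, the alternating sum ∑_{k=0}^n (-1)^k * C(n,k) * Cat(k) * C(2n-2k, n-k) equals C(n, ⌊n/2⌋)^2, where Cat(k) = C(2k,k)/(k+1) is the k-th Catalan number. -/
/-!
Creative telescoping. Both sides satisfy the second-order recurrence
`p₂ n * a (n + 2) + p₁ n * a (n + 1) + p₀ n * a n = 0` with `p₂ n ≠ 0`, and they agree at
`n = 0, 1`. For the right-hand side this is a direct computation with ratios of central binomial
coefficients, split by the parity of `n`. For the sum, the certificate `cert n k`, a rational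
multiple of the summand, satisfies
`p₂ n * term (n + 2) k + p₁ n * term (n + 1) k + p₀ n * term n k = cert n (k + 1) - cert n k`
for `k < n`, so summing over `k` telescopes; the remaining terms with `k ≥ n` are handled
separately. Each of these identities reduces, after expressing all terms through hypergeometric
ratios, to an identity of rational functions.
-/

open Finset

section CastRatios

variable {K : Type*} [Field K] [CharZero K]

theorem Nat.cast_centralBinom_succ (m : ℕ) :
    ((m + 1).centralBinom : K) = 2 * (2 * m + 1) / (m + 1) * m.centralBinom := by
  have h : ((m + 1 : ℕ) : K) * (m + 1).centralBinom = 2 * (2 * m + 1) * m.centralBinom := by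
    exact_mod_cast Nat.succ_mul_centralBinom_succ m
  push_cast at h
  field_simp
  linear_combination h

theorem Nat.cast_catalan_eq_centralBinom_div (k : ℕ) :
    (catalan k : K) = k.centralBinom / (k + 1) := by
  have h : ((k + 1 : ℕ) : K) * catalan k = k.centralBinom := by
    exact_mod_cast succ_mul_catalan_eq_centralBinom k
  push_cast at h
  field_simp
  linear_combination h

theorem Nat.cast_succ_choose (k j : ℕ) :
    ((k + j + 1).choose k : K) = (k + j + 1) / (j + 1) * (k + j).choose k := by
  have h : ((k + j).choose k : K) * (k + j + 1) = (k + j + 1).choose k * (j + 1) := by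
    have := Nat.choose_mul_succ_eq (k + j) k
    rw [show k + j + 1 - k = j + 1 by omega] at this
    exact_mod_cast this
  field_simp
  linear_combination -h

theorem Nat.cast_choose_succ_right (k j : ℕ) :
    ((k + j + 1).choose (k + 1) : K) = (j + 1) / (k + 1) * (k + j + 1).choose k := by
  have h : ((k + j + 1).choose (k + 1) : K) * (k + 1) = (k + j + 1).choose k * (j + 1) := by
    have := Nat.choose_succ_right_eq (k + j + 1) k
    rw [show k + j + 1 - k = j + 1 by omega] at this
    exact_mod_cast this
  field_simp
  linear_combination h

end CastRatios

theorem Nat.two_mul_choose_two_mul_add_one (m : ℕ) :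
    2 * (2 * m + 1).choose m = (m + 1).centralBinom := by
  rw [Nat.centralBinom_eq_two_mul_choose, show 2 * (m + 1) = 2 * m + 1 + 1 by ring,
    Nat.choose_succ_succ, Nat.choose_symm_half]
  ring

theorem eq_of_two_step_recurrence {R : Type*} [CommRing R] [IsDomain R] (p₂ p₁ p₀ : ℕ → R)
    {a b : ℕ → R} (hp : ∀ n, p₂ n ≠ 0)
    (ha : ∀ n, p₂ n * a (n + 2) + p₁ n * a (n + 1) + p₀ n * a n = 0)
    (hb : ∀ n, p₂ n * b (n + 2) + p₁ n * b (n + 1) + p₀ n * b n = 0)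
    (h0 : a 0 = b 0) (h1 : a 1 = b 1) (n : ℕ) : a n = b n := by
  induction n using Nat.twoStepInduction with
  | zero => exact h0
  | one => exact h1
  | more n ih₀ ih₁ =>
    apply mul_left_cancel₀ (hp n)
    linear_combination ha n - hb n - p₁ n * ih₁ - p₀ n * ih₀

namespace CatalanAlternatingSum

def term (n k : ℕ) : ℚ := (-1) ^ k * n.choose k * catalan k * (n - k).centralBinom

theorem term_succ_left (k j : ℕ) :
    term (k + j + 1) k = 2 * (k + j + 1) * (2 * j + 1) / (j + 1) ^ 2 * term (k + j) k := by
  simp only [term, show k + j + 1 - k = j + 1 by omega, show k + j - k = j by omega,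
    Nat.cast_succ_choose, Nat.cast_centralBinom_succ]
  field_simp

theorem term_succ_succ (k j : ℕ) :
    term (k + j + 1) (k + 1) =
      -((2 * k + 1) * (j + 1) ^ 2 / ((k + 1) * (k + 2) * (2 * j + 1))) * term (k + j + 1) k := by
  simp only [term, show k + j + 1 - k = j + 1 by omega, show k + j + 1 - (k + 1) = j by omega,
    Nat.cast_choose_succ_right, Nat.cast_centralBinom_succ, Nat.cast_catalan_eq_centralBinom_div,
    pow_succ]
  push_cast
  field_simp
  ring

-- The recurrence and the certificate `cert` below are the output of Zeilberger's algorithm.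
def p₂ (x : ℚ) : ℚ := (x + 3) ^ 2 * (2 * x + 3)
def p₁ (x : ℚ) : ℚ := -4 * (2 * x ^ 2 + 8 * x + 7)
def p₀ (x : ℚ) : ℚ := -16 * (x + 1) ^ 2 * (2 * x + 5)

def certNum (x y : ℚ) : ℚ :=
  -256 + 500 * y + 228 * y ^ 2 - 448 * y ^ 3 + 80 * y ^ 4
  + x * (-1432 + 1596 * y + 1452 * y ^ 2 - 1384 * y ^ 3 + 192 * y ^ 4)
  + x ^ 2 * (-3108 + 1548 * y + 2952 * y ^ 2 - 1560 * y ^ 3 + 144 * y ^ 4)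
  + x ^ 3 * (-3372 + 52 * y + 2640 * y ^ 2 - 752 * y ^ 3 + 32 * y ^ 4)
  + x ^ 4 * (-1936 - 736 * y + 1072 * y ^ 2 - 128 * y ^ 3)
  + x ^ 5 * (-560 - 400 * y + 160 * y ^ 2)
  + x ^ 6 * (-64 - 64 * y)

def cert (n k : ℕ) : ℚ :=
  k * certNum n k / ((n + 2) * (n + 1 - k) ^ 2 * (n + 2 - k) ^ 2) * term n k

theorem cert_eq (k j : ℕ) :
    cert (k + j + 1) k = k * certNum (k + j + 1) k /
      ((k + j + 3) * (j + 2) ^ 2 * (j + 3) ^ 2) * term (k + j + 1) k := by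
  rw [cert]
  push_cast
  ring

theorem cert_succ_eq (k j : ℕ) :
    cert (k + j + 1) (k + 1) = (k + 1) * certNum (k + j + 1) (k + 1) /
      ((k + j + 3) * (j + 1) ^ 2 * (j + 2) ^ 2) * term (k + j + 1) (k + 1) := by
  rw [cert]
  push_cast
  ring

theorem telescoping_step (k j : ℕ) :
    p₂ (k + j + 1 : ℕ) * term (k + j + 1 + 2) k + p₁ (k + j + 1 : ℕ) * term (k + j + 1 + 1) k
      + p₀ (k + j + 1 : ℕ) * term (k + j + 1) k =
        cert (k + j + 1) (k + 1) - cert (k + j + 1) k := by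
  have h₁ := term_succ_left k (j + 1)
  have h₂ := term_succ_left k (j + 2)
  rw [show k + (j + 1) + 1 = k + j + 1 + 1 by ring, show k + (j + 1) = k + j + 1 by ring] at h₁
  rw [show k + (j + 2) + 1 = k + j + 1 + 2 by ring,
    show k + (j + 2) = k + j + 1 + 1 by ring] at h₂
  rw [cert_eq, cert_succ_eq, h₂, h₁, term_succ_succ]
  push_cast
  unfold p₂ p₁ p₀ certNum
  field_simp
  ring

theorem telescoping_boundary (n : ℕ) :
    p₂ n * (term (n + 2) n + term (n + 2) (n + 1) + term (n + 2) (n + 2))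
      + p₁ n * (term (n + 1) n + term (n + 1) (n + 1)) + p₀ n * term n n = -cert n n := by
  have h₁ := term_succ_left n 0
  have h₂ := term_succ_left n 1
  have h₃ := term_succ_succ n 0
  have h₄ := term_succ_succ n 1
  have h₅ := term_succ_succ (n + 1) 0
  simp only [add_zero, add_assoc, Nat.reduceAdd, Nat.cast_zero, Nat.cast_one, Nat.cast_add]
    at h₁ h₂ h₃ h₄ h₅ ⊢
  rw [cert, h₅, h₄, h₃, h₂, h₁]
  unfold p₂ p₁ p₀ certNum
  field_simp
  ring

def altSum (n : ℕ) : ℚ := ∑ k ∈ range (n + 1), term n k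

theorem altSum_recurrence (n : ℕ) :
    p₂ n * altSum (n + 2) + p₁ n * altSum (n + 1) + p₀ n * altSum n = 0 := by
  have hbulk : ∑ k ∈ range n, (p₂ n * term (n + 2) k + p₁ n * term (n + 1) k + p₀ n * term n k)
      = cert n n :=
    calc _ = ∑ k ∈ range n, (cert n (k + 1) - cert n k) := sum_congr rfl fun k hk => by
          obtain ⟨j, rfl⟩ : ∃ j, n = k + j + 1 := ⟨n - k - 1, by grind⟩
          exact telescoping_step k j
      _ = cert n n := by rw [sum_range_sub]; simp [cert]
  have hsplit : p₂ n * altSum (n + 2) + p₁ n * altSum (n + 1) + p₀ n * altSum n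
      = ∑ k ∈ range n, (p₂ n * term (n + 2) k + p₁ n * term (n + 1) k + p₀ n * term n k)
        + (p₂ n * (term (n + 2) n + term (n + 2) (n + 1) + term (n + 2) (n + 2))
          + p₁ n * (term (n + 1) n + term (n + 1) (n + 1)) + p₀ n * term n n) := by
    simp only [altSum, sum_range_succ, sum_add_distrib, ← mul_sum]
    ring
  rw [hsplit, hbulk, telescoping_boundary]
  ring

def sqCentral (n : ℕ) : ℚ := (n.choose (n / 2) : ℚ) ^ 2

theorem sqCentral_two_mul (m : ℕ) : sqCentral (2 * m) = (m.centralBinom : ℚ) ^ 2 := by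
  rw [sqCentral, Nat.mul_div_cancel_left m two_pos, Nat.centralBinom_eq_two_mul_choose]

theorem sqCentral_two_mul_add_one (m : ℕ) :
    sqCentral (2 * m + 1) = ((m + 1).centralBinom : ℚ) ^ 2 / 4 := by
  rw [sqCentral, show (2 * m + 1) / 2 = m by omega, ← Nat.two_mul_choose_two_mul_add_one]
  push_cast
  ring

theorem sqCentral_recurrence (n : ℕ) :
    p₂ n * sqCentral (n + 2) + p₁ n * sqCentral (n + 1) + p₀ n * sqCentral n = 0 := by
  obtain ⟨m, rfl | rfl⟩ := Nat.even_or_odd' n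
  · rw [show 2 * m + 2 = 2 * (m + 1) by ring, sqCentral_two_mul, sqCentral_two_mul,
      sqCentral_two_mul_add_one, Nat.cast_centralBinom_succ]
    push_cast
    unfold p₂ p₁ p₀
    field_simp
    ring
  · rw [show 2 * m + 1 + 2 = 2 * (m + 1) + 1 by ring, show 2 * m + 1 + 1 = 2 * (m + 1) by ring,
      sqCentral_two_mul, sqCentral_two_mul_add_one, sqCentral_two_mul_add_one,
      Nat.cast_centralBinom_succ (m + 1)]
    push_cast
    unfold p₂ p₁ p₀
    field_simp
    ring

theorem altSum_eq_sqCentral (n : ℕ) : altSum n = sqCentral n :=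
  eq_of_two_step_recurrence (fun n => p₂ n) (fun n => p₁ n) (fun n => p₀ n)
    (fun n => by unfold p₂; positivity) altSum_recurrence sqCentral_recurrence
    (by simp [altSum, term, sqCentral])
    (by norm_num [altSum, term, sqCentral, sum_range_succ, Nat.centralBinom]) n

end CatalanAlternatingSum

theorem stmt_0 (n : ℕ) :
    ∑ k ∈ Finset.range (n + 1),
      (-1 : ℤ) ^ k * (n.choose k) * (catalan k) * ((2 * n - 2 * k).choose (n - k)) =
    ((n.choose (n / 2) : ℤ)) ^ 2 := by
  have h := CatalanAlternatingSum.altSum_eq_sqCentral n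
  simp only [CatalanAlternatingSum.altSum, CatalanAlternatingSum.term,
    CatalanAlternatingSum.sqCentral, Nat.centralBinom_eq_two_mul_choose, Nat.mul_sub] at h
  exact_mod_cast h
end

section
/- Define f(n) = ∑_{k=0}^n (-1)^k * C(n,k) * Cat(k) * C(2n-2k, n-k) (as an integer). Then for all n ≥ 2, f satisfies the second-order recurrence (2n-1)(n+1)^2 * f(n) = 4(2n^2-1) * f(n-1) + 16(2n+1)(n-1)^2 * f(n-2). -/
def f1 (n : ℕ) : ℤ :=
  ∑ k ∈ Finset.range (n + 1),
    (-1 : ℤ) ^ k * (n.choose k) * (catalan k) * ((2 * n - 2 * k).choose (n - k))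

open Finset Nat

noncomputable section

/-- The summand of `f1`, over ℚ. -/
def aa (n k : ℕ) : ℚ :=
  (-1 : ℚ) ^ k * (n.choose k) * (catalan k) * ((2 * n - 2 * k).choose (n - k))

lemma fact_ne (m : ℕ) : ((m ! : ℚ)) ≠ 0 := by
  exact_mod_cast (Nat.factorial_pos m).ne'

lemma catalan_cast (k : ℕ) : (catalan k : ℚ) = (2 * k)! / (k ! * (k + 1)!) := by
  have h : (k + 1) * catalan k = (2 * k).choose k := by
    rw [succ_mul_catalan_eq_centralBinom, Nat.centralBinom_eq_two_mul_choose]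
  have h2 : ((k + 1) * catalan k : ℚ) = ((2 * k).choose k : ℚ) := by exact_mod_cast congrArg (Nat.cast (R := ℚ)) h
  rw [Nat.cast_choose ℚ (by omega : k ≤ 2 * k)] at h2
  have h3 : (2 * k - k) = k := by omega
  rw [h3] at h2
  have f3 : (((k + 1)!) : ℚ) = ((k : ℚ) + 1) * k ! := by
    rw [Nat.factorial_succ]; push_cast; ring
  rw [f3, eq_div_iff (by positivity)]
  field_simp at h2
  linear_combination h2

lemma aa_eq (k j : ℕ) :
    aa (k + j) k = (-1 : ℚ) ^ k * ((k + j)! * ((2 * k)! * (2 * j)!)) /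
      ((k ! * k ! * (k + 1)!) * (j ! * j ! * j !)) := by
  unfold aa
  have h1 : (k + j) - k = j := by omega
  have h2 : 2 * (k + j) - 2 * k = 2 * j := by omega
  rw [h1, h2, Nat.cast_choose ℚ (by omega : k ≤ k + j),
    Nat.cast_choose ℚ (by omega : j ≤ 2 * j), catalan_cast]
  have h3 : (k + j) - k = j := by omega
  have h4 : 2 * j - j = j := by omega
  rw [h3, h4]
  field_simp

lemma aa_zero_of_lt {n k : ℕ} (h : n < k) : aa n k = 0 := by
  simp [aa, Nat.choose_eq_zero_of_lt h]

/-- Ratio in `n`. -/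
lemma L1 (k j : ℕ) :
    2 * ((k : ℚ) + j + 1) * (2 * j + 1) * aa (k + j) k
      = ((j : ℚ) + 1) ^ 2 * aa (k + j + 1) k := by
  have e1 := aa_eq k j
  have e2 := aa_eq k (j + 1)
  have h : k + (j + 1) = k + j + 1 := by omega
  rw [h] at e2
  rw [e1, e2]
  have f1 : ((k + j + 1)! : ℚ) = ((k : ℚ) + j + 1) * (k + j)! := by
    have : (k + j + 1)! = (k + j + 1) * (k + j)! := Nat.factorial_succ _
    rw [this]; push_cast; ring
  have f2 : ((2 * (j + 1))! : ℚ) = (2 * (j : ℚ) + 2) * (2 * j + 1) * (2 * j)! := by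
    have : 2 * (j + 1) = (2 * j + 1) + 1 := by omega
    rw [this, Nat.factorial_succ, Nat.factorial_succ]; push_cast; ring
  have f3 : (((j + 1)!) : ℚ) = ((j : ℚ) + 1) * j ! := by
    rw [Nat.factorial_succ]; push_cast; ring
  rw [f1, f2, f3]
  have hj : ((j : ℚ) + 1) ≠ 0 := by positivity
  field_simp

/-- Ratio in `k`. -/
lemma L3 (k j : ℕ) :
    ((k : ℚ) + 1) * ((k : ℚ) + 2) * (2 * j + 1) * aa (k + j + 1) (k + 1)
      = -(2 * (k : ℚ) + 1) * ((j : ℚ) + 1) ^ 2 * aa (k + j + 1) k := by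
  have e1 := aa_eq k (j + 1)
  have h1 : k + (j + 1) = k + j + 1 := by omega
  rw [h1] at e1
  have e2 := aa_eq (k + 1) j
  have h2 : k + 1 + j = k + j + 1 := by omega
  rw [h2] at e2
  rw [e1, e2]
  have f2 : ((2 * (k + 1))! : ℚ) = (2 * (k : ℚ) + 2) * (2 * k + 1) * (2 * k)! := by
    have : 2 * (k + 1) = (2 * k + 1) + 1 := by omega
    rw [this, Nat.factorial_succ, Nat.factorial_succ]; push_cast; ring
  have f2' : ((2 * (j + 1))! : ℚ) = (2 * (j : ℚ) + 2) * (2 * j + 1) * (2 * j)! := by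
    have : 2 * (j + 1) = (2 * j + 1) + 1 := by omega
    rw [this, Nat.factorial_succ, Nat.factorial_succ]; push_cast; ring
  have f3 : (((k + 1)!) : ℚ) = ((k : ℚ) + 1) * k ! := by
    rw [Nat.factorial_succ]; push_cast; ring
  have f4 : (((k + 1 + 1)!) : ℚ) = ((k : ℚ) + 2) * ((k + 1)!) := by
    rw [Nat.factorial_succ]; push_cast; ring
  have f5 : (((j + 1)!) : ℚ) = ((j : ℚ) + 1) * j ! := by
    rw [Nat.factorial_succ]; push_cast; ring
  rw [f2, f2', f4, f3, f5]
  have hj : ((j : ℚ) + 1) ≠ 0 := by positivity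
  have hk : ((k : ℚ) + 1) ≠ 0 := by positivity
  have hk2 : ((k : ℚ) + 2) ≠ 0 := by positivity
  field_simp
  ring

/-- Certificate polynomial. -/
def A4 (x y : ℚ) : ℚ :=
  -8 * x ^ 4 + 6 * x ^ 3 + 5 * x ^ 2 - 2 * x + y * (12 * x ^ 3 - 6 * x ^ 2 - 6 * x + 1)
    + y ^ 2 * (-4 * x ^ 2 + 2 * x + 2)

/-- The Zeilberger certificate. -/
def Gc (n k : ℕ) : ℚ :=
  aa n k * ((k : ℚ) * (k + 1) * A4 n k) / ((n : ℚ) ^ 2 * (2 * n - 2 * k - 1))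

lemma key (n k : ℕ) (hn : 2 ≤ n) (hk : k ≤ n) :
    (2 * (n : ℚ) - 1) * ((n : ℚ) + 1) ^ 2 * aa n k
      - 4 * (2 * (n : ℚ) ^ 2 - 1) * aa (n - 1) k
      - 16 * (2 * (n : ℚ) + 1) * ((n : ℚ) - 1) ^ 2 * aa (n - 2) k
      = Gc n (k + 1) - Gc n k := by
  rcases Nat.lt_or_ge k (n - 1) with hlt | hge
  · -- generic case : k ≤ n - 2
    obtain ⟨j, rfl⟩ : ∃ j, n = k + j + 2 := ⟨n - k - 2, by omega⟩
    have e1 : k + j + 2 - 1 = k + j + 1 := by omega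
    have e2 : k + j + 2 - 2 = k + j := by omega
    rw [e1, e2]
    have h1 := L1 k j
    have h2 := L1 k (j + 1)
    have h3 := L3 k (j + 1)
    push_cast at h1 h2 h3
    simp only [show k + (j + 1) = k + j + 1 by omega,
      show k + (j + 1) + 1 = k + j + 2 by omega,
      show k + j + 1 + 1 = k + j + 2 by omega] at h2 h3
    have hb1 : aa (k + j + 1) k
        = ((j : ℚ) + 2) ^ 2 * aa (k + j + 2) k / (2 * ((k : ℚ) + j + 2) * (2 * j + 3)) := by
      rw [eq_div_iff (by positivity)]
      linear_combination h2
    have hb2 : aa (k + j) k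
        = ((j : ℚ) + 1) ^ 2 * aa (k + j + 1) k / (2 * ((k : ℚ) + j + 1) * (2 * j + 1)) := by
      rw [eq_div_iff (by positivity)]
      linear_combination h1
    have ha1 : aa (k + j + 2) (k + 1)
        = -(2 * (k : ℚ) + 1) * ((j : ℚ) + 2) ^ 2 * aa (k + j + 2) k /
            (((k : ℚ) + 1) * ((k : ℚ) + 2) * (2 * j + 3)) := by
      rw [eq_div_iff (by positivity)]
      linear_combination h3
    unfold Gc A4
    rw [hb2, hb1, ha1]
    have d1 : ((k : ℚ) + j + 2) ≠ 0 := by positivity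
    have d2 : (2 * (j : ℚ) + 3) ≠ 0 := by positivity
    have d3 : (2 * (j : ℚ) + 1) ≠ 0 := by positivity
    have d4 : ((k : ℚ) + j + 1) ≠ 0 := by positivity
    have d5 : ((k : ℚ) + 1) ≠ 0 := by positivity
    have d6 : ((k : ℚ) + 2) ≠ 0 := by positivity
    push_cast
    have dd1 : (2 * ((k : ℚ) + j + 2) - 2 * ((k : ℚ) + 1) - 1) = 2 * (j : ℚ) + 1 := by ring
    have dd2 : (2 * ((k : ℚ) + j + 2) - 2 * (k : ℚ) - 1) = 2 * (j : ℚ) + 3 := by ring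
    rw [dd1, dd2]
    field_simp
    ring
  · -- boundary cases: k = n - 1 or k = n
    rcases Nat.eq_or_lt_of_le hk with rfl | hlt2
    · -- k = n
      have z1 : aa (k - 1) k = 0 := aa_zero_of_lt (by omega)
      have z2 : aa (k - 2) k = 0 := aa_zero_of_lt (by omega)
      have z3 : aa k (k + 1) = 0 := aa_zero_of_lt (by omega)
      rw [z1, z2]
      unfold Gc A4
      rw [z3]
      have d0 : ((k : ℚ)) ≠ 0 := by
        have : (0 : ℚ) < (k : ℚ) := by exact_mod_cast (by omega : 0 < k)
        exact this.ne'
      have dd : (2 * (k : ℚ) - 2 * (k : ℚ) - 1) = -1 := by ring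
      rw [dd]
      field_simp
      ring
    · -- k = n - 1
      obtain ⟨rfl⟩ : n = k + 1 := by omega
      have e1 : k + 1 - 1 = k := by omega
      have e2 : k + 1 - 2 = k - 1 := by omega
      rw [e1, e2, aa_zero_of_lt (by omega : k - 1 < k)]
      have h1 := L1 k 0
      have h3 := L3 k 0
      simp only [Nat.add_zero] at h1 h3
      push_cast at h1 h3
      have haak : aa k k = aa (k + 1) k / (2 * ((k : ℚ) + 1)) := by
        rw [eq_div_iff (by positivity)]
        linear_combination h1
      have ha11 : aa (k + 1) (k + 1)
          = -(2 * (k : ℚ) + 1) * aa (k + 1) k / (((k : ℚ) + 1) * ((k : ℚ) + 2)) := by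
        rw [eq_div_iff (by positivity)]
        linear_combination h3
      unfold Gc A4
      rw [haak, ha11]
      have d5 : ((k : ℚ) + 1) ≠ 0 := by positivity
      have d6 : ((k : ℚ) + 2) ≠ 0 := by positivity
      push_cast
      have dd1 : (2 * ((k : ℚ) + 1) - 2 * ((k : ℚ) + 1) - 1) = -1 := by ring
      have dd2 : (2 * ((k : ℚ) + 1) - 2 * (k : ℚ) - 1) = 1 := by ring
      rw [dd1, dd2]
      field_simp
      ring

lemma f1_cast (n : ℕ) : ((f1 n : ℚ)) = ∑ k ∈ Finset.range (n + 1), aa n k := by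
  unfold f1 aa
  push_cast
  rfl

end

theorem stmt_1 (n : ℕ) (hn : 2 ≤ n) :
    (2 * (n : ℤ) - 1) * ((n : ℤ) + 1) ^ 2 * f1 n =
      4 * (2 * (n : ℤ) ^ 2 - 1) * f1 (n - 1) +
      16 * (2 * (n : ℤ) + 1) * ((n : ℤ) - 1) ^ 2 * f1 (n - 2) := by
  obtain ⟨m, rfl⟩ : ∃ m, n = m + 2 := ⟨n - 2, by omega⟩
  have H : ∑ k ∈ Finset.range (m + 3),
      ((2 * ((m + 2 : ℕ) : ℚ) - 1) * (((m + 2 : ℕ) : ℚ) + 1) ^ 2 * aa (m + 2) k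
        - 4 * (2 * ((m + 2 : ℕ) : ℚ) ^ 2 - 1) * aa (m + 1) k
        - 16 * (2 * ((m + 2 : ℕ) : ℚ) + 1) * (((m + 2 : ℕ) : ℚ) - 1) ^ 2 * aa m k)
      = Gc (m + 2) (m + 3) - Gc (m + 2) 0 := by
    rw [← Finset.sum_range_sub (fun k => Gc (m + 2) k) (m + 3)]
    refine Finset.sum_congr rfl fun k hk => ?_
    have hk' : k ≤ m + 2 := by
      have := Finset.mem_range.mp hk; omega
    have hkey := key (m + 2) k (by omega) hk'
    rw [show m + 2 - 1 = m + 1 by omega, show m + 2 - 2 = m by omega] at hkey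
    exact hkey
  have hG0 : Gc (m + 2) 0 = 0 := by simp [Gc]
  have hGtop : Gc (m + 2) (m + 3) = 0 := by
    simp [Gc, aa_zero_of_lt (show m + 2 < m + 3 by omega)]
  rw [hG0, hGtop, sub_zero] at H
  simp only [Finset.sum_sub_distrib, ← Finset.mul_sum] at H
  have c0 : ∑ k ∈ Finset.range (m + 3), aa (m + 2) k = ((f1 (m + 2) : ℚ)) := by
    rw [f1_cast]
  have c1 : ∑ k ∈ Finset.range (m + 3), aa (m + 1) k = ((f1 (m + 1) : ℚ)) := by
    rw [show m + 3 = (m + 2) + 1 by omega, Finset.sum_range_succ,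
      aa_zero_of_lt (show m + 1 < m + 2 by omega), add_zero, f1_cast]
  have c2 : ∑ k ∈ Finset.range (m + 3), aa m k = ((f1 m : ℚ)) := by
    rw [show m + 3 = (m + 2) + 1 by omega, Finset.sum_range_succ,
      aa_zero_of_lt (show m < m + 2 by omega), add_zero,
      show m + 2 = (m + 1) + 1 by omega, Finset.sum_range_succ,
      aa_zero_of_lt (show m < m + 1 by omega), add_zero, f1_cast]
  rw [c0, c1, c2] at H
  have e1 : m + 2 - 1 = m + 1 := by omega
  have e2 : m + 2 - 2 = m := by omega
  rw [e1, e2]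
  have : ((((2 * ((m + 2 : ℕ) : ℤ) - 1) * (((m + 2 : ℕ) : ℤ) + 1) ^ 2 * f1 (m + 2)) : ℤ) : ℚ)
      = (((4 * (2 * ((m + 2 : ℕ) : ℤ) ^ 2 - 1) * f1 (m + 1)
        + 16 * (2 * ((m + 2 : ℕ) : ℤ) + 1) * (((m + 2 : ℕ) : ℤ) - 1) ^ 2 * f1 m) : ℤ) : ℚ) := by
    push_cast
    push_cast at H
    linarith [H]
  exact_mod_cast this
end

section
/- For every natural number n, ∑_{k=0}^{2n} (-1)^k * C(2n,k) * C(2k,k) * C(2(2n)-2k, 2n-k) = C(2n,n)^2, i.e., F(2n) = C(2n,n)^2 where F(m) = ∑_{k=0}^m (-1)^k C(m,k) C(2k,k) C(2m-2k, m-k). -/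
open Finset Nat

set_option maxHeartbeats 4000000

def F3 (m : ℕ) : ℤ :=
  ∑ k ∈ Finset.range (m + 1),
    (-1 : ℤ) ^ k * (m.choose k) * ((2 * k).choose k) * ((2 * m - 2 * k).choose (m - k))

lemma chq (a b : ℕ) : (((a+b).choose a : ℕ) : ℚ) = (a+b)! / (a ! * b !) := by
  have h := Nat.add_choose_mul_factorial_mul_factorial b a
  rw [Nat.add_comm b a] at h
  have h1 : (((a+b).choose a : ℕ) * (b ! : ℚ) * (a ! : ℚ)) = ((a+b)! : ℚ) := by
    exact_mod_cast congrArg (Nat.cast (R := ℚ)) h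
  have ha : (a ! : ℚ) ≠ 0 := by exact_mod_cast Nat.factorial_ne_zero a
  have hb : (b ! : ℚ) ≠ 0 := by exact_mod_cast Nat.factorial_ne_zero b
  field_simp
  linarith [h1]

lemma fstep (n : ℕ) : (((n+1)! : ℕ) : ℚ) = ((n:ℚ)+1) * (n ! : ℚ) := by
  exact_mod_cast congrArg (Nat.cast (R := ℚ)) (Nat.factorial_succ n)

def Pq (m k : ℚ) : ℚ :=
  4*(m+1)*k^2*( -((m+2)*(2*m+1)*(4*m+5)) + 2*k*(10*m^2+26*m+15) - 2*k^2*(8*m+11) + 4*k^3 )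

def tq (m k : ℕ) : ℚ :=
  (-1)^k * (m.choose k : ℕ) * ((2*k).choose k : ℕ) * ((2*m - 2*k).choose (m-k) : ℕ)

def Gq (m k : ℕ) : ℚ :=
  (-1)^k * Pq (m:ℚ) (k:ℚ) * ((m+2).choose k : ℕ) * ((2*k).choose k : ℕ) * ((2*(m-k)).choose (m-k) : ℕ)
    / (((m:ℚ)+1)*((m:ℚ)+2)*(((m-k : ℕ) : ℚ)+1)*(((m-k : ℕ) : ℚ)+2))

lemma gen (k i : ℕ) :
    ((k:ℚ)+i+3)^2 * ((-1)^k * ((k+i+3).choose k : ℕ) * ((2*k).choose k : ℕ) * ((2*i+6).choose (i+3) : ℕ))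
      - 16*((k:ℚ)+i+2)^2 * ((-1)^k * ((k+i+1).choose k : ℕ) * ((2*k).choose k : ℕ) * ((2*i+2).choose (i+1) : ℕ))
  = (-1)^(k+1) * Pq ((k:ℚ)+i+1) ((k:ℚ)+1) * ((k+i+3).choose (k+1) : ℕ) * ((2*k+2).choose (k+1) : ℕ) * ((2*i).choose i : ℕ)
      / (((k:ℚ)+i+2)*((k:ℚ)+i+3)*((i:ℚ)+1)*((i:ℚ)+2))
    - (-1)^k * Pq ((k:ℚ)+i+1) (k:ℚ) * ((k+i+3).choose k : ℕ) * ((2*k).choose k : ℕ) * ((2*i+2).choose (i+1) : ℕ)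
      / (((k:ℚ)+i+2)*((k:ℚ)+i+3)*((i:ℚ)+2)*((i:ℚ)+3)) := by
  have e1 : (((k+i+3).choose k : ℕ) : ℚ) = ((k+(i+3))! : ℚ) / (k ! * (i+3)!) := by
    rw [show k+i+3 = k+(i+3) by omega]; exact chq k (i+3)
  have e2 : (((2*k).choose k : ℕ) : ℚ) = ((k+k)! : ℚ) / (k ! * k !) := by
    rw [show 2*k = k+k by omega]; exact chq k k
  have e3 : (((2*i+6).choose (i+3) : ℕ) : ℚ) = (((i+3)+(i+3))! : ℚ) / ((i+3)! * (i+3)!) := by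
    rw [show 2*i+6 = (i+3)+(i+3) by omega]; exact chq (i+3) (i+3)
  have e4 : (((k+i+1).choose k : ℕ) : ℚ) = ((k+(i+1))! : ℚ) / (k ! * (i+1)!) := by
    rw [show k+i+1 = k+(i+1) by omega]; exact chq k (i+1)
  have e5 : (((2*i+2).choose (i+1) : ℕ) : ℚ) = (((i+1)+(i+1))! : ℚ) / ((i+1)! * (i+1)!) := by
    rw [show 2*i+2 = (i+1)+(i+1) by omega]; exact chq (i+1) (i+1)
  have e6 : (((k+i+3).choose (k+1) : ℕ) : ℚ) = (((k+1)+(i+2))! : ℚ) / ((k+1)! * (i+2)!) := by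
    rw [show k+i+3 = (k+1)+(i+2) by omega]; exact chq (k+1) (i+2)
  have e7 : (((2*k+2).choose (k+1) : ℕ) : ℚ) = (((k+1)+(k+1))! : ℚ) / ((k+1)! * (k+1)!) := by
    rw [show 2*k+2 = (k+1)+(k+1) by omega]; exact chq (k+1) (k+1)
  have e8 : (((2*i).choose i : ℕ) : ℚ) = ((i+i)! : ℚ) / (i ! * i !) := by
    rw [show 2*i = i+i by omega]; exact chq i i
  rw [e1, e2, e3, e4, e5, e6, e7, e8]
  -- factorial reductions
  have f1 : ((k+(i+3))! : ℚ) = ((k:ℚ)+i+3)*((k:ℚ)+i+2)*((k+(i+1))! : ℚ) := by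
    rw [show k+(i+3) = (k+(i+1))+1+1 by omega, fstep, fstep]; push_cast; ring
  have f2 : (((i+3)+(i+3))! : ℚ) = (2*(i:ℚ)+6)*(2*(i:ℚ)+5)*(2*(i:ℚ)+4)*(2*(i:ℚ)+3)*(2*(i:ℚ)+2)*(2*(i:ℚ)+1)*((i+i)! : ℚ) := by
    rw [show (i+3)+(i+3) = (i+i)+1+1+1+1+1+1 by omega, fstep, fstep, fstep, fstep, fstep, fstep]
    push_cast; ring
  have f3 : (((i+1)+(i+1))! : ℚ) = (2*(i:ℚ)+2)*(2*(i:ℚ)+1)*((i+i)! : ℚ) := by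
    rw [show (i+1)+(i+1) = (i+i)+1+1 by omega, fstep, fstep]; push_cast; ring
  have f4 : (((k+1)+(i+2))! : ℚ) = ((k:ℚ)+i+3)*((k:ℚ)+i+2)*((k+(i+1))! : ℚ) := by
    rw [show (k+1)+(i+2) = (k+(i+1))+1+1 by omega, fstep, fstep]; push_cast; ring
  have f5 : (((k+1)+(k+1))! : ℚ) = (2*(k:ℚ)+2)*(2*(k:ℚ)+1)*((k+k)! : ℚ) := by
    rw [show (k+1)+(k+1) = (k+k)+1+1 by omega, fstep, fstep]; push_cast; ring
  have f6 : (((i+3) : ℕ)! : ℚ) = ((i:ℚ)+3)*((i:ℚ)+2)*((i:ℚ)+1)*(i ! : ℚ) := by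
    rw [show i+3 = i+1+1+1 by omega, fstep, fstep, fstep]; push_cast; ring
  have f7 : (((i+2) : ℕ)! : ℚ) = ((i:ℚ)+2)*((i:ℚ)+1)*(i ! : ℚ) := by
    rw [show i+2 = i+1+1 by omega, fstep, fstep]; push_cast; ring
  have f8 : (((i+1) : ℕ)! : ℚ) = ((i:ℚ)+1)*(i ! : ℚ) := fstep i
  have f9 : (((k+1) : ℕ)! : ℚ) = ((k:ℚ)+1)*(k ! : ℚ) := fstep k
  rw [f1, f2, f3, f4, f5, f6, f7, f8, f9, pow_succ]
  have nk : (k ! : ℚ) ≠ 0 := by exact_mod_cast Nat.factorial_ne_zero k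
  have ni : (i ! : ℚ) ≠ 0 := by exact_mod_cast Nat.factorial_ne_zero i
  have h1 : ((k:ℚ)+1) ≠ 0 := by positivity
  have h2 : ((i:ℚ)+1) ≠ 0 := by positivity
  have h3 : ((i:ℚ)+2) ≠ 0 := by positivity
  have h4 : ((i:ℚ)+3) ≠ 0 := by positivity
  have h5 : ((k:ℚ)+i+2) ≠ 0 := by positivity
  have h6 : ((k:ℚ)+i+3) ≠ 0 := by positivity
  have h7 : (2*(i:ℚ)+1) ≠ 0 := by positivity
  have h8 : (2*(i:ℚ)+2) ≠ 0 := by positivity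
  simp only [Pq]
  field_simp
  ring

lemma step (k i : ℕ) :
    ((k:ℚ)+i+3)^2 * tq (k+i+3) k - 16*((k:ℚ)+i+2)^2 * tq (k+i+1) k
      = Gq (k+i+1) (k+1) - Gq (k+i+1) k := by
  have s1 : 2*(k+i+3) - 2*k = 2*i+6 := by omega
  have s2 : (k+i+3) - k = i+3 := by omega
  have s3 : 2*(k+i+1) - 2*k = 2*i+2 := by omega
  have s4 : (k+i+1) - k = i+1 := by omega
  have s5 : (k+i+1) - (k+1) = i := by omega
  have s6 : k+i+1+2 = k+i+3 := by omega
  have s7 : 2*(i+1) = 2*i+2 := by omega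
  have s9 : 2*(k+1) = 2*k+2 := by omega
  simp only [tq, Gq, s1, s2, s3, s4, s5, s6, s7, s9]
  push_cast
  simp only [Pq]
  have h := gen k i
  simp only [Pq] at h
  linear_combination h

lemma Gq_zero (m : ℕ) : Gq m 0 = 0 := by
  simp [Gq, Pq]

-- central binomial step over ℚ
lemma cbq (m : ℕ) : ((m:ℚ)+1) * ((2*m+2).choose (m+1) : ℕ) = 2*(2*(m:ℚ)+1) * ((2*m).choose m : ℕ) := by
  have h := Nat.succ_mul_centralBinom_succ m
  have h2 : (m+1) * ((2*(m+1)).choose (m+1)) = 2*(2*m+1) * ((2*m).choose m) := h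
  have h3 : 2*(m+1) = 2*m+2 := by omega
  rw [h3] at h2
  exact_mod_cast congrArg (Nat.cast (R := ℚ)) h2

lemma boundary (m : ℕ) :
    Gq m m
      + (((m:ℚ)+2)^2 * tq (m+2) m - 16*((m:ℚ)+1)^2 * tq m m)
      + (((m:ℚ)+2)^2 * tq (m+2) (m+1) - 16*((m:ℚ)+1)^2 * tq m (m+1))
      + (((m:ℚ)+2)^2 * tq (m+2) (m+2) - 16*((m:ℚ)+1)^2 * tq m (m+2)) = 0 := by
  have z1 : tq m (m+1) = 0 := by
    simp [tq, Nat.choose_eq_zero_of_lt (by omega : m < m+1)]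
  have z2 : tq m (m+2) = 0 := by
    simp [tq, Nat.choose_eq_zero_of_lt (by omega : m < m+2)]
  rw [z1, z2]
  have s1 : 2*(m+2) - 2*m = 4 := by omega
  have s2 : (m+2) - m = 2 := by omega
  have s3 : 2*m - 2*m = 0 := by omega
  have s4 : m - m = 0 := by omega
  have s5 : 2*(m+2) - 2*(m+1) = 2 := by omega
  have s6 : (m+2) - (m+1) = 1 := by omega
  have s7 : 2*(m+2) - 2*(m+2) = 0 := by omega
  have s8 : (m+2) - (m+2) = 0 := by omega
  have c22 : (m+2).choose m = (m+2).choose 2 := by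
    have := Nat.choose_symm (by omega : 2 ≤ m+2)
    rw [show m+2-2 = m by omega] at this
    exact this
  have c21 : (m+2).choose (m+1) = m+2 := Nat.choose_succ_self_right (m+1)
  simp only [tq, Gq, s1, s2, s3, s4, s5, s6, s7, s8, c22, c21,
    show (2*0 : ℕ) = 0 from rfl, show Nat.choose 0 0 = 1 from rfl,
    show Nat.choose 4 2 = 6 from rfl, show Nat.choose 2 1 = 2 from rfl]
  have hm1 : ((m:ℚ)+1) ≠ 0 := by positivity
  have hm2 : ((m:ℚ)+2) ≠ 0 := by positivity
  have hc1 : (((2*(m+1)).choose (m+1) : ℕ) : ℚ) = 2*(2*(m:ℚ)+1) * ((2*m).choose m : ℕ) / ((m:ℚ)+1) := by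
    rw [show 2*(m+1) = 2*m+2 by omega]
    field_simp
    linear_combination cbq m
  have hc2 : (((2*(m+2)).choose (m+2) : ℕ) : ℚ)
      = 2*(2*(m:ℚ)+3) * ((2*(m+1)).choose (m+1) : ℕ) / ((m:ℚ)+2) := by
    have h := cbq (m+1)
    rw [show 2*(m+1)+2 = 2*(m+2) by omega] at h
    push_cast at h ⊢
    field_simp
    linear_combination h
  rw [hc2, hc1]
  rw [Nat.cast_choose_two]
  simp only [Pq, pow_succ]
  push_cast
  simp only [Nat.choose_self, Nat.cast_one]
  field_simp
  ring

lemma recq (m : ℕ) :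
    ((m:ℚ)+2)^2 * (∑ k ∈ range (m+3), tq (m+2) k)
      = 16*((m:ℚ)+1)^2 * (∑ k ∈ range (m+1), tq m k) := by
  have z1 : tq m (m+1) = 0 := by
    simp [tq, Nat.choose_eq_zero_of_lt (by omega : m < m+1)]
  have z2 : tq m (m+2) = 0 := by
    simp [tq, Nat.choose_eq_zero_of_lt (by omega : m < m+2)]
  have key : ∑ k ∈ range (m+3), (((m:ℚ)+2)^2 * tq (m+2) k - 16*((m:ℚ)+1)^2 * tq m k) = 0 := by
    rw [Finset.sum_range_succ, Finset.sum_range_succ, Finset.sum_range_succ]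
    have htel : ∑ k ∈ range m, (((m:ℚ)+2)^2 * tq (m+2) k - 16*((m:ℚ)+1)^2 * tq m k)
        = Gq m m - Gq m 0 := by
      rw [← Finset.sum_range_sub (fun k => Gq m k) m]
      apply Finset.sum_congr rfl
      intro k hk
      have hkm : k < m := Finset.mem_range.mp hk
      obtain ⟨i, rfl⟩ : ∃ i, m = k + i + 1 := ⟨m - k - 1, by omega⟩
      have h := step k i
      rw [show k+i+1+2 = k+i+3 by omega]
      push_cast at h ⊢
      linear_combination h
    rw [htel, Gq_zero]
    have hb := boundary m
    linear_combination hb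
  have expand : ∑ k ∈ range (m+3), (((m:ℚ)+2)^2 * tq (m+2) k - 16*((m:ℚ)+1)^2 * tq m k)
      = ((m:ℚ)+2)^2 * (∑ k ∈ range (m+3), tq (m+2) k)
        - 16*((m:ℚ)+1)^2 * (∑ k ∈ range (m+3), tq m k) := by
    rw [Finset.sum_sub_distrib, Finset.mul_sum, Finset.mul_sum]
  have hz : ∑ k ∈ range (m+3), tq m k = ∑ k ∈ range (m+1), tq m k := by
    rw [Finset.sum_range_succ, Finset.sum_range_succ, z1, z2]
    ring
  rw [expand, hz] at key
  linarith

lemma F3q (m : ℕ) : (F3 m : ℚ) = ∑ k ∈ range (m+1), tq m k := by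
  simp only [F3, tq]
  push_cast
  rfl

theorem stmt_3 (n : ℕ) : F3 (2 * n) = (((2 * n).choose n : ℤ)) ^ 2 := by
  have main : ∀ n : ℕ, (F3 (2*n) : ℚ) = (((2*n).choose n : ℕ) : ℚ)^2 := by
    intro n
    induction n with
    | zero => norm_num [F3]
    | succ p ih =>
      have hr := recq (2*p)
      rw [F3q] at ih ⊢
      rw [show 2*(p+1) = 2*p+2 by omega]
      rw [show 2*p+2+1 = 2*p+3 by omega]
      have hp1 : ((p:ℚ)+1) ≠ 0 := by positivity
      have e1 : (((2*p+2).choose (p+1) : ℕ) : ℚ)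
          = 2*(2*(p:ℚ)+1)*((2*p).choose p : ℕ)/((p:ℚ)+1) := by
        field_simp
        linear_combination cbq p
      rw [e1]
      have hne : ((2*(p:ℚ)*1)+2)^2 ≠ 0 := by positivity
      have hr2 : ((2*(p:ℚ))+2)^2 * (∑ k ∈ range (2*p+3), tq (2*p+2) k)
          = 16*((2*(p:ℚ))+1)^2 * ((((2*p).choose p : ℕ) : ℚ))^2 := by
        push_cast at hr
        rw [ih] at hr
        linear_combination hr
      have hne2 : ((2*(p:ℚ))+2)^2 ≠ 0 := by positivity
      apply mul_left_cancel₀ hne2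
      rw [hr2]
      field_simp
      ring
  have h := main n
  exact_mod_cast h
end

section
/- Define G(n) = ∑_{k=0}^n (-1)^k * C(n,k) * C(2k, k+1) * C(2n-2k, n-k). Then for all n ≥ 2, (n+1)^2 * G(n) = 16 n^2 * G(n-2). -/
def G5 (n : ℕ) : ℤ :=
  ∑ k ∈ Finset.range (n + 1),
    (-1 : ℤ) ^ k * (n.choose k) * ((2 * k).choose (k + 1)) * ((2 * n - 2 * k).choose (n - k))

/-!
Creative telescoping. Write `F n k` for the summand of `G5 n`. With Zeilberger's certificate
`R n k = P(n, k) / ((n - 1)² (2(n - k) - 1))`, `P = certNum`, one has for `2 ≤ n` and `k ≤ n`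
`(n + 1)² F n k - 16 n² F (n - 2) k = R n (k + 1) F n (k + 1) - R n k F n k`.
All four terms are rational multiples of `(-1)^k C(n,k) C(2k,k) C(2(n-k),n-k)`, so this is an
identity of rational functions in `n` and `k`. Summing over `0 ≤ k ≤ n` telescopes to `0`, because
`F n 0 = 0` (as `C(0,1) = 0`) and `F n (n + 1) = 0`.
-/

open Finset

namespace Nat

variable {K : Type*} [Field K] [CharZero K]

theorem cast_choose_succ_right_s5 {n k : ℕ} (hk : k ≤ n) :
    (n.choose (k + 1) : K) = n.choose k * (n - k) / (k + 1) := by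
  rw [eq_div_iff (cast_add_one_ne_zero _), ← cast_sub hk]
  exact_mod_cast choose_succ_right_eq n k

theorem cast_choose_eq_succ_choose_mul_div {n k : ℕ} (hk : k ≤ n + 1) :
    (n.choose k : K) = (n + 1).choose k * (n + 1 - k) / (n + 1) := by
  rw [eq_div_iff (cast_add_one_ne_zero _),
    show (n : K) + 1 - k = ((n + 1 - k : ℕ) : K) by push_cast [hk]; ring]
  exact_mod_cast choose_mul_succ_eq n k

theorem cast_choose_two_mul_succ (k : ℕ) :
    ((2 * k).choose (k + 1) : K) = k.centralBinom * k / (k + 1) := by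
  rw [eq_div_iff (cast_add_one_ne_zero _)]
  have h := choose_succ_right_eq (2 * k) k
  rw [two_mul, Nat.add_sub_cancel, ← two_mul] at h
  exact_mod_cast h

theorem cast_centralBinom_succ_s5 (k : ℕ) :
    ((k + 1).centralBinom : K) = 2 * (2 * k + 1) * k.centralBinom / (k + 1) := by
  rw [eq_div_iff (cast_add_one_ne_zero _), mul_comm]
  exact_mod_cast succ_mul_centralBinom_succ k

end Nat

def certNum {K : Type*} [CommRing K] (x y : K) : K :=
  1 + 2*y - y^2 - 2*y^3 - 2*x + 2*x*y + 4*x*y^2 - 2*x*y^3 - 2*x*y^4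
    - 3*x^2 - 6*x^2*y + 3*x^2*y^2 + 6*x^2*y^3 + 4*x^3 - 4*x^3*y^2

theorem certNum_identity {K : Type*} [Field K] [CharZero K] (x y B : K) (hx₁ : x - 1 ≠ 0)
    (hy₁ : y + 1 ≠ 0) (hy₂ : y + 2 ≠ 0) (hxy₁ : 2 * (x - y) - 1 ≠ 0)
    (hxy₃ : 2 * (x - y) - 3 ≠ 0) :
    (x + 1) ^ 2 * (B * y / (y + 1)) - 16 * x ^ 2 * (B * y * ((x - y) * (x - y - 1)) ^ 2 /
      (4 * x * (x - 1) * (y + 1) * (2 * (x - y) - 1) * (2 * (x - y) - 3))) =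
      certNum x (y + 1) * -(B * (x - y) ^ 2 * (2 * y + 1) /
          ((y + 1) * (y + 2) * (2 * (x - y) - 1))) / ((x - 1) ^ 2 * (2 * (x - y) - 3))
        - certNum x y * (B * y / (y + 1)) / ((x - 1) ^ 2 * (2 * (x - y) - 1)) := by
  have h₁ : (x - y) * 2 - 1 ≠ 0 := by rwa [mul_comm]
  have h₃ : (x - y) * 2 - 3 ≠ 0 := by rwa [mul_comm]
  unfold certNum
  field_simp
  ring

theorem two_mul_natCast_sub_sub_ne_zero (n k : ℕ) (c : ℤ) :
    2 * ((n : ℚ) - k) - (2 * c + 1) ≠ 0 := by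
  have h : (2 * ((n : ℤ) - k) - (2 * c + 1) : ℤ) ≠ 0 := by omega
  exact_mod_cast h

namespace G5

def summand (n k : ℕ) : ℚ :=
  (-1) ^ k * n.choose k * (2 * k).choose (k + 1) * (2 * n - 2 * k).choose (n - k)

def baseTerm (n k : ℕ) : ℚ :=
  (-1) ^ k * n.choose k * k.centralBinom * (n - k).centralBinom

def cert (n k : ℕ) : ℚ :=
  certNum (n : ℚ) k * summand n k / (((n : ℚ) - 1) ^ 2 * (2 * ((n : ℚ) - k) - 1))

theorem summand_eq (n k : ℕ) : summand n k = baseTerm n k * k / (k + 1) := by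
  rw [summand, baseTerm, ← Nat.mul_sub, Nat.cast_choose_two_mul_succ,
    ← Nat.centralBinom_eq_two_mul_choose]
  ring

theorem summand_succ_eq {n k : ℕ} (hk : k ≤ n) :
    summand n (k + 1) = -(baseTerm n k * (n - k) ^ 2 * (2 * k + 1) /
      ((k + 1) * (k + 2) * (2 * ((n : ℚ) - k) - 1))) := by
  obtain rfl | hlt := hk.eq_or_lt
  · simp [summand]
  obtain ⟨j, rfl⟩ := Nat.exists_eq_add_of_lt hlt
  have hj : k + j + 1 - k = j + 1 := by omega
  have hj' : k + j + 1 - (k + 1) = j := by omega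
  have hjq : ((k + j + 1 : ℕ) : ℚ) - k = j + 1 := by push_cast; ring
  rw [summand, baseTerm, ← Nat.mul_sub, hj, hj', hjq, Nat.cast_choose_succ_right_s5 hk,
    Nat.cast_choose_two_mul_succ, Nat.cast_centralBinom_succ_s5, Nat.cast_centralBinom_succ_s5,
    ← Nat.centralBinom_eq_two_mul_choose]
  have : 2 * ((j : ℚ) + 1) - 1 ≠ 0 := by linarith [j.cast_nonneg (α := ℚ)]
  push_cast
  field_simp
  ring

theorem summand_sub_two_eq {n k : ℕ} (hn : 2 ≤ n) (hk : k ≤ n) :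
    summand (n - 2) k = baseTerm n k * k * (((n : ℚ) - k) * ((n : ℚ) - k - 1)) ^ 2 /
      (4 * n * (n - 1) * (k + 1) * (2 * ((n : ℚ) - k) - 1) * (2 * ((n : ℚ) - k) - 3)) := by
  obtain ⟨m, rfl⟩ := Nat.exists_eq_add_of_le' hn
  rw [Nat.add_sub_cancel]
  obtain ⟨j, rfl⟩ | hmk := le_or_gt k m |>.imp Nat.exists_eq_add_of_le id
  · have hj : k + j + 2 - k = j + 1 + 1 := by omega
    have hjq : ((k + j + 2 : ℕ) : ℚ) - k = j + 2 := by push_cast; ring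
    rw [summand, baseTerm, ← Nat.mul_sub, Nat.add_sub_cancel_left, hj, hjq,
      Nat.cast_choose_eq_succ_choose_mul_div (n := k + j) (k := k) (by omega),
      Nat.cast_choose_eq_succ_choose_mul_div (n := k + j + 1) (k := k) (by omega),
      Nat.cast_choose_two_mul_succ, Nat.cast_centralBinom_succ_s5, Nat.cast_centralBinom_succ_s5,
      ← Nat.centralBinom_eq_two_mul_choose, show k + j + 1 + 1 = k + j + 2 by rfl]
    have h₁ : 2 * ((j : ℚ) + 2) - 1 ≠ 0 := by linarith [j.cast_nonneg (α := ℚ)]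
    have h₃ : 2 * ((j : ℚ) + 2) - 3 ≠ 0 := by linarith [j.cast_nonneg (α := ℚ)]
    have hn₁ : (k : ℚ) + j + 2 - 1 ≠ 0 := by
      linarith [k.cast_nonneg (α := ℚ), j.cast_nonneg (α := ℚ)]
    push_cast
    field_simp
    ring
  · have hvanish : ((m : ℚ) + 2 - k) * ((m : ℚ) + 2 - k - 1) = 0 := by
      obtain rfl | rfl : k = m + 1 ∨ k = m + 2 := by omega
      all_goals push_cast; ring
    simp [summand, Nat.choose_eq_zero_of_lt hmk, hvanish]

theorem summand_recurrence {n k : ℕ} (hn : 2 ≤ n) (hk : k ≤ n) :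
    ((n : ℚ) + 1) ^ 2 * summand n k - 16 * (n : ℚ) ^ 2 * summand (n - 2) k
      = cert n (k + 1) - cert n k := by
  have hx₁ : (n : ℚ) - 1 ≠ 0 := by
    rw [sub_ne_zero]; exact_mod_cast (by omega : n ≠ 1)
  have h₁ : 2 * ((n : ℚ) - k) - 1 ≠ 0 := by
    simpa using two_mul_natCast_sub_sub_ne_zero n k 0
  have h₃ : 2 * ((n : ℚ) - k) - 3 ≠ 0 := by
    simpa [show (2 : ℚ) + 1 = 3 by norm_num] using two_mul_natCast_sub_sub_ne_zero n k 1
  rw [cert, cert, summand_succ_eq hk, summand_eq, summand_sub_two_eq hn hk, Nat.cast_add_one,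
    show 2 * ((n : ℚ) - (k + 1)) - 1 = 2 * (n - k) - 3 by ring]
  exact certNum_identity _ _ _ hx₁ (Nat.cast_add_one_ne_zero k) (by positivity) h₁ h₃

theorem cert_zero (n : ℕ) : cert n 0 = 0 := by
  simp [cert, summand]

theorem cert_succ_self (n : ℕ) : cert n (n + 1) = 0 := by
  simp [cert, summand]

theorem sum_summand_eq {n N : ℕ} (hN : n + 1 ≤ N) :
    ∑ k ∈ range N, summand n k = G5 n := by
  rw [G5, Int.cast_sum]
  refine (sum_subset (range_subset_range.2 hN) fun k _ hk => ?_).symm.trans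
    (sum_congr rfl fun k _ => ?_)
  · simp [summand, Nat.choose_eq_zero_of_lt (by simpa using hk : n < k)]
  · push_cast [summand]; rfl

end G5

theorem stmt_5 (n : ℕ) (hn : 2 ≤ n) :
    ((n : ℤ) + 1) ^ 2 * G5 n = 16 * (n : ℤ) ^ 2 * G5 (n - 2) := by
  have telescope : ∑ k ∈ range (n + 1),
      (((n : ℚ) + 1) ^ 2 * G5.summand n k - 16 * (n : ℚ) ^ 2 * G5.summand (n - 2) k) = 0 := by
    rw [sum_congr rfl fun k hk => G5.summand_recurrence hn (mem_range_succ_iff.1 hk),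
      sum_range_sub, G5.cert_succ_self, G5.cert_zero, sub_zero]
  rw [sum_sub_distrib, ← mul_sum, ← mul_sum, G5.sum_summand_eq le_rfl,
    G5.sum_summand_eq (by omega), sub_eq_zero] at telescope
  exact_mod_cast telescope
end

section
/- For every natural number n, G(2n+1) = -C(2n+1, n)^2, where G(m) = ∑_{k=0}^m (-1)^k * C(m,k) * C(2k, k+1) * C(2m-2k, m-k). -/
open Polynomial Finset

def G6 (m : ℕ) : ℤ :=
  ∑ k ∈ Finset.range (m + 1),
    (-1 : ℤ) ^ k * (m.choose k) * ((2 * k).choose (k + 1)) * ((2 * m - 2 * k).choose (m - k))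

private lemma coeff_term_L (n k : ℕ) (hk : k ≤ 2 * n + 1) :
    ((((-(C X * (1 + X) ^ 2) : (Polynomial ℤ)[X])) ^ k * (X * (1 + C X) ^ 2) ^ (2 * n + 1 - k) *
          ((2 * n + 1).choose k : (Polynomial ℤ)[X])).coeff (2 * n)).coeff (2 * n + 1)
      = (-1 : ℤ) ^ k * ((2 * n + 1).choose k) * ((2 * k).choose (k + 1)) *
          ((2 * (2 * n + 1) - 2 * k).choose (2 * n + 1 - k)) := by
  have e1 : (-(C X * (1 + X) ^ 2) : (Polynomial ℤ)[X]) ^ k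
      = (-1) ^ k * (C (X ^ k) * (1 + X) ^ (2 * k)) := by
    rw [neg_pow (C X * (1 + X) ^ 2 : (Polynomial ℤ)[X]) k, mul_pow, ← map_pow, ← pow_mul]
  have e2 : ((X * (1 + C X) ^ 2 : (Polynomial ℤ)[X])) ^ (2 * n + 1 - k)
      = X ^ (2 * n + 1 - k) * C ((1 + X) ^ (2 * (2 * n + 1 - k))) := by
    rw [mul_pow, ← pow_mul, map_pow, map_add, map_one]
  have hrw : ((-(C X * (1 + X) ^ 2) : (Polynomial ℤ)[X])) ^ k *
        (X * (1 + C X) ^ 2) ^ (2 * n + 1 - k) * (((2 * n + 1).choose k : (Polynomial ℤ)[X]))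
      = ((-1 : ℤ) ^ k * ((2 * n + 1).choose k : ℤ)) •
          (C (X ^ k * (1 + X) ^ (2 * (2 * n + 1 - k))) *
            (X ^ (2 * n + 1 - k) * (1 + X) ^ (2 * k))) := by
    rw [e1, e2, zsmul_eq_mul, map_mul]
    push_cast
    ring
  rw [hrw, coeff_smul, coeff_smul, coeff_C_mul]
  rcases Nat.eq_zero_or_pos k with hk0 | hkpos
  · subst hk0
    have hz : (X ^ (2 * n + 1 - 0) * (1 + X) ^ (2 * 0) : (Polynomial ℤ)[X]).coeff (2 * n)
        = 0 := by
      norm_num [coeff_X_pow]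
    rw [hz, mul_zero, coeff_zero, smul_zero]
    norm_num
  · set s := 2 * n + 1 - k with hs
    have c1 : (X ^ s * (1 + X) ^ (2 * k) : (Polynomial ℤ)[X]).coeff (2 * n)
        = (((2 * k).choose (k - 1) : ℕ) : Polynomial ℤ) := by
      rw [show (2 * n : ℕ) = (k - 1) + s by omega, coeff_X_pow_mul, coeff_one_add_X_pow]
    rw [c1, show ((((2 * k).choose (k - 1) : ℕ)) : Polynomial ℤ)
        = C (((2 * k).choose (k - 1) : ℤ)) by simp, coeff_mul_C]
    have c2 : (X ^ k * (1 + X) ^ (2 * s) : Polynomial ℤ).coeff (2 * n + 1)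
        = (((2 * s).choose s : ℤ)) := by
      rw [show (2 * n + 1 : ℕ) = s + k by omega, coeff_X_pow_mul, coeff_one_add_X_pow]
    rw [c2]
    have hsym : (2 * k).choose (k - 1) = (2 * k).choose (k + 1) := by
      rw [show k - 1 = 2 * k - (k + 1) by omega, Nat.choose_symm (by omega)]
    rw [hsym, show 2 * s = 2 * (2 * n + 1) - 2 * k by omega, smul_eq_mul]
    push_cast
    ring

private lemma lhs_eq (n : ℕ) :
    ((((X * (1 + C X) ^ 2 - C X * (1 + X) ^ 2) : (Polynomial ℤ)[X]) ^ (2 * n + 1)).coeff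
        (2 * n)).coeff (2 * n + 1) = G6 (2 * n + 1) := by
  rw [sub_eq_add_neg, add_comm, add_pow, finset_sum_coeff, finset_sum_coeff]
  rw [G6]
  refine Finset.sum_congr rfl fun k hk => ?_
  rw [Finset.mem_range] at hk
  exact coeff_term_L n k (by omega)

private lemma coeff_term_R (n i j : ℕ) (hi : i ≤ 2 * n + 1) (hj : j ≤ 2 * n + 1) :
    ((X ^ i * (-(C (X : Polynomial ℤ))) ^ (2 * n + 1 - i) *
          ((2 * n + 1).choose i : (Polynomial ℤ)[X]) *
          ((-(X * C X) : (Polynomial ℤ)[X]) ^ j *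
            ((2 * n + 1).choose j : (Polynomial ℤ)[X]))).coeff (2 * n)).coeff (2 * n + 1)
      = if i = n then (if j = n then -(((2 * n + 1).choose n : ℤ)) ^ 2 else 0) else 0 := by
  have e1 : (-(C (X : Polynomial ℤ))) ^ (2 * n + 1 - i)
      = (-1) ^ (2 * n + 1 - i) * C (X ^ (2 * n + 1 - i)) := by
    rw [neg_pow (C (X : Polynomial ℤ)) (2 * n + 1 - i), ← map_pow]
  have e2 : (-(X * C X) : (Polynomial ℤ)[X]) ^ j = (-1) ^ j * (X ^ j * C (X ^ j)) := by
    rw [neg_pow (X * C X : (Polynomial ℤ)[X]) j, mul_pow, ← map_pow]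
  have hrw : X ^ i * (-(C (X : Polynomial ℤ))) ^ (2 * n + 1 - i) *
        (((2 * n + 1).choose i : (Polynomial ℤ)[X])) *
        ((-(X * C X) : (Polynomial ℤ)[X]) ^ j * (((2 * n + 1).choose j : (Polynomial ℤ)[X])))
      = ((-1 : ℤ) ^ (2 * n + 1 - i + j) * ((2 * n + 1).choose i : ℤ) *
            ((2 * n + 1).choose j : ℤ)) •
          (C (X ^ (2 * n + 1 - i + j)) * X ^ (i + j)) := by
    rw [e1, e2, zsmul_eq_mul]
    conv_rhs => rw [pow_add (-1 : ℤ) (2 * n + 1 - i) j, pow_add X (2 * n + 1 - i) j, map_mul,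
      pow_add X i j]
    push_cast
    ring
  rw [hrw, coeff_smul, coeff_smul, coeff_C_mul, coeff_X_pow]
  by_cases h1 : 2 * n = i + j
  · rw [if_pos h1, mul_one, coeff_X_pow]
    by_cases h2 : (2 * n + 1 : ℕ) = 2 * n + 1 - i + j
    · rw [if_pos h2]
      have hij : i = n ∧ j = n := by omega
      rw [if_pos hij.1, if_pos hij.2, smul_eq_mul, mul_one]
      rw [show 2 * n + 1 - i + j = 2 * n + 1 by omega, hij.1, hij.2]
      rw [show ((-1 : ℤ)) ^ (2 * n + 1) = -1 from Odd.neg_one_pow ⟨n, by ring⟩]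
      ring
    · rw [if_neg h2, smul_zero]
      rcases eq_or_ne i n with h | h
      · rw [if_pos h, if_neg (by omega)]
      · rw [if_neg h]
  · rw [if_neg h1, mul_zero, coeff_zero, smul_zero]
    rcases eq_or_ne i n with h | h
    · rw [if_pos h, if_neg (by omega)]
    · rw [if_neg h]

private lemma rhs_eq (n : ℕ) :
    ((((X - C X) * (1 - X * C X) : (Polynomial ℤ)[X]) ^ (2 * n + 1)).coeff (2 * n)).coeff
        (2 * n + 1) = -(((2 * n + 1).choose n : ℤ)) ^ 2 := by
  rw [mul_pow,
    show (X - C X : (Polynomial ℤ)[X]) = X + (-(C (X : Polynomial ℤ))) by ring,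
    show (1 - X * C X : (Polynomial ℤ)[X]) = (-(X * C X : (Polynomial ℤ)[X])) + 1 by ring,
    add_pow, add_pow]
  simp only [one_pow, mul_one]
  rw [Finset.sum_mul_sum]
  rw [finset_sum_coeff, finset_sum_coeff]
  have key : ∀ i ∈ Finset.range (2 * n + 1 + 1),
      (((∑ j ∈ Finset.range (2 * n + 1 + 1),
          X ^ i * (-(C (X : Polynomial ℤ))) ^ (2 * n + 1 - i) *
            ((2 * n + 1).choose i : (Polynomial ℤ)[X]) *
            ((-(X * C X) : (Polynomial ℤ)[X]) ^ j *
              ((2 * n + 1).choose j : (Polynomial ℤ)[X]))).coeff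
          (2 * n)).coeff (2 * n + 1))
        = if i = n then -(((2 * n + 1).choose n : ℤ)) ^ 2 else 0 := by
    intro i hi
    rw [Finset.mem_range] at hi
    rw [finset_sum_coeff, finset_sum_coeff]
    rw [Finset.sum_congr rfl fun j hj => coeff_term_R n i j (by omega)
      (by rw [Finset.mem_range] at hj; omega)]
    by_cases hin : i = n
    · simp only [hin, eq_self_iff_true, if_true]
      rw [Finset.sum_ite_eq' (Finset.range (2 * n + 1 + 1)) n
        (fun _ => -(((2 * n + 1).choose n : ℤ)) ^ 2)]
      rw [if_pos (Finset.mem_range.mpr (by omega))]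
    · simp [hin]
  rw [Finset.sum_congr rfl key]
  rw [Finset.sum_ite_eq' (Finset.range (2 * n + 1 + 1)) n
    (fun _ => -(((2 * n + 1).choose n : ℤ)) ^ 2)]
  rw [if_pos (Finset.mem_range.mpr (by omega))]

theorem stmt_6 (n : ℕ) : G6 (2 * n + 1) = -(((2 * n + 1).choose n : ℤ)) ^ 2 := by
  rw [← lhs_eq n,
    show (X * (1 + C X) ^ 2 - C X * (1 + X) ^ 2 : (Polynomial ℤ)[X])
      = (X - C X) * (1 - X * C X) by ring,
    rhs_eq n]
end

section
/- For every natural number n, G(2n) = 0, where G(m) = ∑_{k=0}^m (-1)^k * C(m,k) * C(2k, k+1) * C(2m-2k, m-k). -/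
def G7 (m : ℕ) : ℤ :=
  ∑ k ∈ Finset.range (m + 1),
    (-1 : ℤ) ^ k * (m.choose k) * ((2 * k).choose (k + 1)) * ((2 * m - 2 * k).choose (m - k))

open Polynomial Finset

/-- The two-variable polynomial ring ℤ[x][y]; the outer variable plays the role of `y`. -/
noncomputable abbrev Bx7 : Type := Polynomial (Polynomial ℤ)

/-- The inner variable `x`. -/
noncomputable def xB7 : Bx7 := C X

/-- The outer variable `y`. -/
noncomputable def yB7 : Bx7 := X

/-- The coefficient of `x^(m-1) y^m` in `((x-y)(1-xy))^m` vanishes for even `m ≥ 1`,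
since every monomial of `(x-y)^m (1-xy)^m` contributing to `y^m` has even `x`-degree. -/
lemma lemA7 (m : ℕ) (hm : Even m) (hm1 : 1 ≤ m) :
    (((xB7 - yB7) ^ m * (1 - xB7 * yB7) ^ m).coeff m).coeff (m - 1) = 0 := by
  obtain ⟨t, rfl⟩ := hm
  set m := t + t with hmdef
  rw [show xB7 - yB7 = xB7 + (-yB7) by ring, add_pow,
    show (1 : Bx7) - xB7 * yB7 = 1 + (-(xB7 * yB7)) by ring, add_pow,
    sum_mul_sum]
  simp only [finset_sum_coeff]
  refine Finset.sum_eq_zero fun i hi => ?_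
  refine Finset.sum_eq_zero fun j hj => ?_
  rw [mem_range] at hi hj
  have ht : (xB7 ^ i * (-yB7) ^ (m - i) * ((m.choose i : ℕ) : Bx7)) *
      (1 ^ j * (-(xB7 * yB7)) ^ (m - j) * ((m.choose j : ℕ) : Bx7))
      = C ((C ((-1 : ℤ) ^ ((m-i)+(m-j)) * (m.choose i : ℤ) * (m.choose j : ℤ)) : Polynomial ℤ)
            * X ^ (i+(m-j)))
        * X ^ ((m-i)+(m-j)) := by
    simp only [xB7, yB7, C_mul, C_pow, C_neg, C_1, C_eq_natCast, C_eq_intCast]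
    ring
  rw [ht, coeff_C_mul, coeff_X_pow]
  by_cases he : m = (m-i)+(m-j)
  · rw [if_pos he, mul_one, coeff_C_mul, coeff_X_pow, if_neg (by omega), mul_zero]
  · rw [if_neg he, mul_zero, coeff_zero]

/-- The coefficient of `x^(m-1) y^m` in `((x-y)(1-xy))^m` equals `G7 m` for `m ≥ 1`,
via the factorization `(x-y)(1-xy) = x(1+y)² - (1+x)² y` and the binomial theorem. -/
lemma lemB7 (m : ℕ) (hm1 : 1 ≤ m) :
    (((xB7 - yB7) ^ m * (1 - xB7 * yB7) ^ m).coeff m).coeff (m - 1) = G7 m := by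
  rw [← mul_pow,
    show (xB7 - yB7) * (1 - xB7 * yB7) = (-((1+xB7)^2 * yB7)) + xB7 * (1+yB7)^2 by ring,
    add_pow]
  simp only [finset_sum_coeff]
  unfold G7
  refine Finset.sum_congr rfl fun k hk => ?_
  rw [mem_range] at hk
  have hkm : k ≤ m := by omega
  have ht : ((-((1+xB7)^2 * yB7)) ^ k * (xB7 * (1+yB7)^2) ^ (m-k) * ((m.choose k : ℕ) : Bx7))
      = C ((C ((-1 : ℤ) ^ k * (m.choose k : ℤ)) : Polynomial ℤ) * ((1+X)^(2*k) * X^(m-k)))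
        * (X ^ k * (1+X) ^ (2*(m-k))) := by
    rw [show -((1+xB7)^2 * yB7) = (-1) * ((1+xB7)^2 * yB7) by ring, mul_pow (-1 : Bx7),
      mul_pow ((1+xB7)^2) yB7, ← pow_mul (1+xB7), mul_pow xB7 ((1+yB7)^2), ← pow_mul (1+yB7)]
    simp only [xB7, yB7, C_mul, C_pow, C_neg, C_1, C_add, C_eq_natCast, C_eq_intCast]
    ring
  rw [ht, coeff_C_mul, coeff_X_pow_mul', if_pos hkm, coeff_one_add_X_pow]
  have hq : (C ((-1 : ℤ) ^ k * (m.choose k : ℤ)) : Polynomial ℤ) * ((1+X)^(2*k) * X^(m-k))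
        * (((2*(m-k)).choose (m-k) : ℕ) : Polynomial ℤ)
      = C ((-1 : ℤ) ^ k * (m.choose k : ℤ) * ((2*(m-k)).choose (m-k) : ℤ))
        * (X ^ (m-k) * (1+X) ^ (2*k)) := by
    simp only [C_mul, C_pow, C_neg, C_1, C_add, C_eq_natCast, C_eq_intCast]
    ring
  rw [hq, coeff_C_mul, coeff_X_pow_mul']
  rcases Nat.eq_zero_or_pos k with rfl | hk1
  · rw [if_neg (by omega)]
    simp
  · rw [if_pos (by omega), coeff_one_add_X_pow,
      show m - 1 - (m - k) = k - 1 by omega,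
      show (k : ℕ) - 1 = 2*k - (k+1) by omega, Nat.choose_symm (by omega),
      show 2*(m-k) = 2*m-2*k by omega]
    ring

theorem stmt_7 (n : ℕ) : G7 (2 * n) = 0 := by
  rcases Nat.eq_zero_or_pos n with rfl | hn
  · simp [G7]
  · rw [← lemB7 (2 * n) (by omega), lemA7 (2 * n) (even_two_mul n) (by omega)]
end

section
/- For every natural number n, ∑_{k=0}^{2n} (-1)^k * C(2n,k) * Cat(k) * Cat(2n-k) = Cat(n) * C(2n,n), where Cat(k) = C(2k,k)/(k+1) is the k-th Catalan number. -/
set_option maxHeartbeats 2000000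

open Finset Nat

private lemma cat_rec (m : ℕ) : (m + 2) * catalan (m + 1) = 2 * (2 * m + 1) * catalan m := by
  have h1 := succ_mul_catalan_eq_centralBinom (m + 1)
  have h2 := Nat.succ_mul_centralBinom_succ m
  have h3 := succ_mul_catalan_eq_centralBinom m
  have hpos : 0 < m + 1 := Nat.succ_pos m
  apply Nat.eq_of_mul_eq_mul_left hpos
  calc (m + 1) * ((m + 2) * catalan (m + 1)) = (m + 1) * centralBinom (m + 1) := by rw [h1]
    _ = 2 * (2 * m + 1) * centralBinom m := h2
    _ = 2 * (2 * m + 1) * ((m + 1) * catalan m) := by rw [h3]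
    _ = (m + 1) * (2 * (2 * m + 1) * catalan m) := by ring

private lemma ch1 (a b : ℕ) : (a + b).choose (a + 1) * (a + 1) = (a + b).choose a * b := by
  have := Nat.choose_succ_right_eq (a + b) a
  simpa [Nat.add_sub_cancel_left] using this

private lemma ch2 (a b : ℕ) : (a + b + 1).choose a * (b + 1) = (a + b + 1) * (a + b).choose a := by
  have h1 := Nat.add_one_mul_choose_eq (a + b) a
  have h2 : (a + b + 1).choose (a + 1) * (a + 1) = (a + b + 1).choose a * (b + 1) := by
    have := Nat.choose_succ_right_eq (a + b + 1) a
    simpa [show a + b + 1 - a = b + 1 by omega] using this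
  omega

private def fq (n k : ℕ) : ℚ :=
  (-1) ^ k * ((2 * n).choose k) * catalan k * catalan (2 * n - k)

private def Mq (N K : ℚ) : ℚ :=
  4*(2*N+1)^2*K^5 - (128*N^3+232*N^2+136*N+26)*K^4
  + (320*N^4+736*N^3+552*N^2+148*N+8)*K^3
  + (-256*N^5-544*N^4-184*N^3+236*N^2+164*N+26)*K^2
  + (-256*N^5-864*N^4-1048*N^3-564*N^2-136*N-12)*K

private def gq (n k : ℕ) : ℚ :=
  if k ≤ 2 * n then
    fq n k * Mq n k /
      (((2*n+3) * (2*n+1-k) * (2*n+2-k)^2 * (2*n+3-k) : ℕ) : ℚ)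
  else if k = 2 * n + 1 then
    ((n:ℚ)+1)*((n:ℚ)+2)*((2*(n:ℚ)+2) * (catalan (2*n+1) : ℚ) - (catalan (2*n+2) : ℚ))
  else if k = 2 * n + 2 then -((n:ℚ)+1)*((n:ℚ)+2)*(catalan (2*n+2) : ℚ)
  else 0

private lemma step_s8 (n k : ℕ) (hk : k ≤ 2 * n + 2) :
    ((n:ℚ)+1)*((n:ℚ)+2) * fq (n+1) k - 4*(2*(n:ℚ)+1)^2 * fq n k = gq n (k+1) - gq n k := by
  rcases lt_or_ge k (2*n) with hlt | hge
  · -- generic case : k ≤ 2n - 1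
    obtain ⟨m, hm⟩ : ∃ m, 2 * n = k + m + 1 := ⟨2*n - k - 1, by omega⟩
    have r4 : 2 * (n + 1) - k = m + 3 := by omega
    have r3 : 2 * (n + 1) = 2 * n + 2 := by ring
    have r1 : 2 * n - k = m + 1 := by omega
    have r2 : 2 * n - (k + 1) = m := by omega
    have d1 : 2*n+1-k = m+2 := by omega
    have d2 : 2*n+2-k = m+3 := by omega
    have d3 : 2*n+3-k = m+4 := by omega
    have d4 : 2*n+1-(k+1) = m+1 := by omega
    have d5 : 2*n+2-(k+1) = m+2 := by omega
    have d6 : 2*n+3-(k+1) = m+3 := by omega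
    simp only [fq, gq, Mq]
    rw [if_pos (show k + 1 ≤ 2*n by omega), if_pos (show k ≤ 2*n by omega)]
    rw [r4, r3, r1, r2, d1, d2, d3, d4, d5, d6, pow_succ]
    -- cast hypotheses
    have hkQ : ((k:ℚ)+1) ≠ 0 := by positivity
    have hk2 : ((k:ℚ)+2) ≠ 0 := by positivity
    have hm1 : (2*(m:ℚ)+1) ≠ 0 := by positivity
    have hm2 : ((m:ℚ)+2) ≠ 0 := by positivity
    have hm3 : ((m:ℚ)+3) ≠ 0 := by positivity
    have hm4 : ((m:ℚ)+4) ≠ 0 := by positivity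
    have hc1 := ch1 k (m + 1)
    rw [show k + (m+1) = 2*n from by omega] at hc1
    have hc1Q : ((2*n).choose (k+1) : ℚ) * ((k:ℚ)+1) = ((2*n).choose k : ℚ) * ((m:ℚ)+1) := by
      exact_mod_cast hc1
    have e1 : ((2*n).choose (k+1) : ℚ) = ((m:ℚ)+1) * ((2*n).choose k) / ((k:ℚ)+1) := by
      rw [eq_div_iff hkQ]; linarith
    have hc2 := cat_rec k
    have hc2Q : ((k:ℚ)+2) * (catalan (k+1) : ℚ) = 2*(2*(k:ℚ)+1) * (catalan k : ℚ) := by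
      exact_mod_cast hc2
    have e2 : (catalan (k+1) : ℚ) = 2*(2*(k:ℚ)+1) * (catalan k : ℚ) / ((k:ℚ)+2) := by
      rw [eq_div_iff hk2]; linarith
    have hc3 := cat_rec m
    have hc3Q : ((m:ℚ)+2) * (catalan (m+1) : ℚ) = 2*(2*(m:ℚ)+1) * (catalan m : ℚ) := by
      exact_mod_cast hc3
    have e3 : (catalan m : ℚ) = ((m:ℚ)+2) * (catalan (m+1) : ℚ) / (2*(2*(m:ℚ)+1)) := by
      rw [eq_div_iff (by positivity : (2*(2*(m:ℚ)+1)) ≠ 0)]; linarith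
    have hc4 := cat_rec (m+1)
    rw [show m+1+1 = m+2 from rfl] at hc4
    have hc4Q : ((m:ℚ)+3) * (catalan (m+2) : ℚ) = 2*(2*(m:ℚ)+3) * (catalan (m+1) : ℚ) := by
      exact_mod_cast hc4
    have e4 : (catalan (m+2) : ℚ) = 2*(2*(m:ℚ)+3) * (catalan (m+1) : ℚ) / ((m:ℚ)+3) := by
      rw [eq_div_iff hm3]; linarith
    have hc5 := cat_rec (m+2)
    rw [show m+2+1 = m+3 from rfl] at hc5
    have hc5Q : ((m:ℚ)+4) * (catalan (m+3) : ℚ) = 2*(2*(m:ℚ)+5) * (catalan (m+2) : ℚ) := by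
      exact_mod_cast hc5
    have e5 : (catalan (m+3) : ℚ) = 2*(2*(m:ℚ)+5) * (catalan (m+2) : ℚ) / ((m:ℚ)+4) := by
      rw [eq_div_iff hm4]; linarith
    have hr1 := ch2 k (m+1)
    rw [show k + (m+1) + 1 = 2*n+1 from by omega, show k + (m+1) = 2*n from by omega] at hr1
    have hr1Q : ((2*n+1).choose k : ℚ) * ((m:ℚ)+2) = (2*(n:ℚ)+1) * ((2*n).choose k : ℚ) := by
      exact_mod_cast hr1
    have e6 : ((2*n+1).choose k : ℚ) = (2*(n:ℚ)+1) * ((2*n).choose k) / ((m:ℚ)+2) := by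
      rw [eq_div_iff hm2]; linarith
    have hr2 := ch2 k (m+2)
    rw [show k + (m+2) + 1 = 2*n+2 from by omega, show k + (m+2) = 2*n+1 from by omega] at hr2
    have hr2Q : ((2*n+2).choose k : ℚ) * ((m:ℚ)+3) = (2*(n:ℚ)+2) * ((2*n+1).choose k : ℚ) := by
      exact_mod_cast hr2
    have e7 : ((2*n+2).choose k : ℚ) = (2*(n:ℚ)+2) * ((2*n+1).choose k) / ((m:ℚ)+3) := by
      rw [eq_div_iff hm3]; linarith
    have hq : 2*(n:ℚ) = (k:ℚ) + m + 1 := by exact_mod_cast hm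
    have hn : (n:ℚ) = ((k:ℚ) + m + 1)/2 := by rw [eq_div_iff (two_ne_zero)]; linarith
    push_cast
    rw [e7, e6, e1, e2, e5, e4, e3, hn]
    field_simp
    ring
  · have hsplit : k = 2*n ∨ k = 2*n+1 ∨ k = 2*n+2 := by omega
    rcases hsplit with h | h | h <;> subst h
    · -- k = 2n
      simp only [fq, gq, Mq]
      rw [if_neg (show ¬ (2*n+1 ≤ 2*n) by omega), if_pos trivial, if_pos (le_refl (2*n))]
      rw [show 2*n - 2*n = 0 from by omega, show 2*(n+1) - 2*n = 2 from by omega,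
        show 2*n+1-2*n = 1 from by omega, show 2*n+2-2*n = 2 from by omega,
        show 2*n+3-2*n = 3 from by omega, Nat.choose_self, catalan_zero, catalan_two]
      have hsign : ((-1:ℚ))^(2*n) = 1 := by rw [pow_mul]; norm_num
      rw [hsign]
      have hA := ch2 (2*n) 0
      have hB := ch2 (2*n) 1
      rw [show 2*n+0+1 = 2*n+1 from by omega, show 2*n+0 = 2*n from by omega,
        Nat.choose_self] at hA
      rw [show 2*n+1+1 = 2*(n+1) from by omega] at hB
      have hA1 : (2*n+1).choose (2*n) = 2*n+1 := by omega
      have hBQ : ((2*(n+1)).choose (2*n) : ℚ) * 2 =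
          (2*((n:ℚ)+1)) * ((2*n+1).choose (2*n) : ℚ) := by exact_mod_cast hB
      have hA1Q : ((2*n+1).choose (2*n) : ℚ) = 2*(n:ℚ)+1 := by exact_mod_cast hA1
      have eA : ((2*(n+1)).choose (2*n) : ℚ) = (2*(n:ℚ)+2)*(2*(n:ℚ)+1)/2 := by
        rw [eq_div_iff (two_ne_zero)]
        rw [hA1Q] at hBQ
        linear_combination hBQ
      have hC1Q : (2*(n:ℚ)+2) * (catalan (2*n+1) : ℚ)
          = 2*(2*(2*(n:ℚ))+1) * (catalan (2*n) : ℚ) := by exact_mod_cast cat_rec (2*n)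
      have e1 : (catalan (2*n+1) : ℚ)
          = 2*(2*(2*(n:ℚ))+1) * (catalan (2*n) : ℚ) / (2*(n:ℚ)+2) := by
        rw [eq_div_iff (by positivity)]; linear_combination hC1Q
      have hC2 := cat_rec (2*n+1)
      rw [show 2*n+1+1 = 2*n+2 from by omega, show 2*n+1+2 = 2*n+3 from by omega] at hC2
      have hC2Q : (2*(n:ℚ)+3) * (catalan (2*n+2) : ℚ)
          = 2*(2*(2*(n:ℚ)+1)+1) * (catalan (2*n+1) : ℚ) := by exact_mod_cast hC2
      have e2 : (catalan (2*n+2) : ℚ)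
          = 2*(2*(2*(n:ℚ)+1)+1) * (catalan (2*n+1) : ℚ) / (2*(n:ℚ)+3) := by
        rw [eq_div_iff (by positivity)]; linear_combination hC2Q
      push_cast
      rw [eA, e2, e1]
      field_simp
      ring
    · -- k = 2n+1
      have hz : (2*n).choose (2*n+1) = 0 := Nat.choose_eq_zero_of_lt (by omega)
      simp only [fq, gq, Mq]
      rw [if_neg (show ¬ (2*n+1+1 ≤ 2*n) by omega), if_neg (show ¬ (2*n+1 ≤ 2*n) by omega),
        if_neg (show ¬ (2*n+1+1 = 2*n+1) by omega),
        if_pos trivial, if_pos trivial, hz]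
      rw [show 2*(n+1) - (2*n+1) = 1 from by omega, catalan_one,
        show 2*(n+1) = (2*n+1)+1 from by omega, Nat.choose_succ_self_right]
      have hsign : ((-1:ℚ))^(2*n+1) = -1 := by
        rw [pow_succ, pow_mul]; norm_num
      rw [hsign]
      push_cast
      ring
    · -- k = 2n+2
      have hz : (2*n).choose (2*n+2) = 0 := Nat.choose_eq_zero_of_lt (by omega)
      simp only [fq, gq, Mq]
      rw [if_neg (show ¬ (2*n+2+1 ≤ 2*n) by omega), if_neg (show ¬ (2*n+2 ≤ 2*n) by omega),
        if_neg (show ¬ (2*n+2+1 = 2*n+1) by omega), if_neg (show ¬ (2*n+2+1 = 2*n+2) by omega),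
        if_neg (show ¬ (2*n+2 = 2*n+1) by omega), if_pos trivial, hz]
      rw [show 2*(n+1) - (2*n+2) = 0 from by omega, catalan_zero,
        show 2*(n+1) = 2*n+2 from by omega, Nat.choose_self]
      have hsign : ((-1:ℚ))^(2*n+2) = 1 := by
        rw [show 2*n+2 = 2*(n+1) from by omega, pow_mul]; norm_num
      rw [hsign]
      push_cast
      ring

private lemma recc (n : ℕ) :
    ((n:ℚ)+1)*((n:ℚ)+2) * (∑ k ∈ range (2*(n+1)+1), fq (n+1) k)
      = 4*(2*(n:ℚ)+1)^2 * (∑ k ∈ range (2*n+1), fq n k) := by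
  have htel : ∑ k ∈ range (2*n+3), (gq n (k+1) - gq n k) = gq n (2*n+3) - gq n 0 :=
    Finset.sum_range_sub (gq n) (2*n+3)
  have hend : gq n (2*n+3) = 0 := by
    simp only [gq]
    rw [if_neg (by omega), if_neg (by omega), if_neg (by omega)]
  have h0 : gq n 0 = 0 := by
    simp only [gq, Mq, fq]
    rw [if_pos (by omega)]
    norm_num
  have hstep : ∑ k ∈ range (2*n+3),
      (((n:ℚ)+1)*((n:ℚ)+2) * fq (n+1) k - 4*(2*(n:ℚ)+1)^2 * fq n k) = 0 := by
    calc ∑ k ∈ range (2*n+3),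
        (((n:ℚ)+1)*((n:ℚ)+2) * fq (n+1) k - 4*(2*(n:ℚ)+1)^2 * fq n k)
        = ∑ k ∈ range (2*n+3), (gq n (k+1) - gq n k) :=
          Finset.sum_congr rfl (fun k hk => by
            refine step_s8 n k ?_
            simp only [Finset.mem_range] at hk
            omega)
      _ = gq n (2*n+3) - gq n 0 := htel
      _ = 0 := by rw [hend, h0, sub_zero]
  rw [Finset.sum_sub_distrib, ← Finset.mul_sum, ← Finset.mul_sum, sub_eq_zero] at hstep
  have hz1 : fq n (2*n+1) = 0 := by
    simp [fq, Nat.choose_eq_zero_of_lt (show 2*n < 2*n+1 by omega)]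
  have hz2 : fq n (2*n+2) = 0 := by
    simp [fq, Nat.choose_eq_zero_of_lt (show 2*n < 2*n+2 by omega)]
  have hsum : ∑ k ∈ range (2*n+3), fq n k = ∑ k ∈ range (2*n+1), fq n k := by
    rw [show 2*n+3 = (2*n+2)+1 from rfl, Finset.sum_range_succ,
      show 2*n+2 = (2*n+1)+1 from rfl, Finset.sum_range_succ, hz1, hz2]
    ring
  rw [show 2*(n+1)+1 = 2*n+3 from by ring, hstep, hsum]

private lemma key_s8 (n : ℕ) :
    ∑ k ∈ range (2*n+1), fq n k = (catalan n : ℚ) * ((2*n).choose n) := by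
  induction n with
  | zero => simp [fq]
  | succ n ih =>
    have h := recc n
    rw [ih] at h
    have hne : ((n:ℚ)+1)*((n:ℚ)+2) ≠ 0 := by positivity
    have h1 : ((n:ℚ)+1) * (catalan n : ℚ) = (centralBinom n : ℚ) := by
      exact_mod_cast succ_mul_catalan_eq_centralBinom n
    have h2 : ((n:ℚ)+2) * (catalan (n+1) : ℚ) = (centralBinom (n+1) : ℚ) := by
      exact_mod_cast succ_mul_catalan_eq_centralBinom (n+1)
    have h3 : ((n:ℚ)+1) * (centralBinom (n+1) : ℚ)
        = 2*(2*(n:ℚ)+1) * (centralBinom n : ℚ) := by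
      exact_mod_cast Nat.succ_mul_centralBinom_succ n
    have hcb : ((2*n).choose n : ℚ) = (centralBinom n : ℚ) := by
      rw [Nat.centralBinom_eq_two_mul_choose]
    have hcb2 : ((2*(n+1)).choose (n+1) : ℚ) = (centralBinom (n+1) : ℚ) := by
      rw [Nat.centralBinom_eq_two_mul_choose]
    apply mul_left_cancel₀ hne
    rw [h, hcb, hcb2]
    have hn1 : ((n:ℚ)+1) ≠ 0 := by positivity
    apply mul_left_cancel₀ hn1
    linear_combination (4*(2*(n:ℚ)+1)^2*(centralBinom n : ℚ)) * h1
      - ((n:ℚ)+1)^2*(centralBinom (n+1):ℚ) * h2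
      - (((n:ℚ)+1)*(centralBinom (n+1):ℚ) + 2*(2*(n:ℚ)+1)*(centralBinom n:ℚ)) * h3

theorem stmt_8 (n : ℕ) :
    ∑ k ∈ Finset.range (2 * n + 1),
      (-1 : ℤ) ^ k * ((2 * n).choose k) * (catalan k) * (catalan (2 * n - k)) =
    (catalan n : ℤ) * ((2 * n).choose n) := by
  have h := key_s8 n
  simp only [fq] at h
  exact_mod_cast h
end

section
/- For every natural number n ≥ 1, the rational-valued hypergeometric-type sum ∑_{k=0}^{2n} [(-2n)_k (-2n-1)_k (1/2)_k] / [(-2n+1/2)_k (2)_k k!] equals (2n+1)! (2n)!^3 / ((4n)! n!^3 (n+1)!), where (x)_k denotes the rising factorial (Pochhammer symbol). -/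
/-!
Wilf–Zeilberger method. Write `F = hgTerm` for the summand and `S n = ∑_{k ≤ 2n} F n k`. With
the certificate `G n k = wzCert n k = R n k * F n k` produced by Zeilberger's algorithm,
`(n+2)(4n+1)(4n+3) F (n+1) k - 2(2n+1)²(2n+3) F n k = G n (k+1) - G n k`,
which only has to be checked on the term ratios `F n (k+1) / F n k` and `F (n+1) k / F n k`:
these are rational functions read off from the recurrences of the Pochhammer symbols.
Summing over `k` telescopes to a first-order recurrence for `S n`, which the closed form also
satisfies, and both sides equal `1` at `n = 0`.
-/

open Finset Polynomial

theorem ascPochhammer_eval_mul_add {S : Type*} [CommSemiring S] (x : S) (k : ℕ) :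
    (ascPochhammer S k).eval x * (x + k) = x * (ascPochhammer S k).eval (x + 1) := by
  rw [← ascPochhammer_succ_eval, ascPochhammer_succ_left, eval_mul, eval_X, eval_comp, eval_add,
    eval_X, eval_one]

theorem ascPochhammer_eval_sub_two {K : Type*} [Field K] (x : K) (k : ℕ)
    (h₁ : x + k - 2 ≠ 0) (h₂ : x + k - 1 ≠ 0) :
    (ascPochhammer K k).eval (x - 2) =
      (x - 2) * (x - 1) * (ascPochhammer K k).eval x / ((x + k - 2) * (x + k - 1)) := by
  have e₁ := ascPochhammer_eval_mul_add (x - 2) k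
  have e₂ := ascPochhammer_eval_mul_add (x - 1) k
  rw [show x - 2 + 1 = x - 1 by ring] at e₁
  rw [show x - 1 + 1 = x by ring] at e₂
  rw [eq_div_iff (mul_ne_zero h₁ h₂)]
  linear_combination (x + k - 1) * e₁ + (x - 2) * e₂

theorem ascPochhammer_eval_intCast_add_half_ne_zero {K : Type*} [Field K] [CharZero K]
    (m : ℤ) (k : ℕ) : (ascPochhammer K k).eval ((m : K) + 1 / 2) ≠ 0 := by
  rw [ne_eq, ascPochhammer_eval_eq_zero_iff]
  rintro ⟨j, -, hj⟩
  have : ((2 * j + 2 * m + 1 : ℤ) : K) = 0 := by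
    push_cast
    linear_combination 2 * hj
  have := Int.cast_eq_zero.mp this
  omega

noncomputable def hgTerm (n k : ℕ) : ℚ :=
  ((ascPochhammer ℚ k).eval (-(2 * n : ℚ)) * (ascPochhammer ℚ k).eval (-(2 * n : ℚ) - 1) *
      (ascPochhammer ℚ k).eval (1 / 2)) /
    ((ascPochhammer ℚ k).eval (-(2 * n : ℚ) + 1 / 2) * (ascPochhammer ℚ k).eval 2 *
      (Nat.factorial k))

theorem ascPochhammer_eval_neg_two_mul_add_half_ne_zero (n k : ℕ) :
    (ascPochhammer ℚ k).eval (-(2 * n : ℚ) + 1 / 2) ≠ 0 := by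
  simpa using ascPochhammer_eval_intCast_add_half_ne_zero (K := ℚ) (-(2 * n)) k

theorem hgTerm_succ_right (n k : ℕ) :
    hgTerm n (k + 1) =
      hgTerm n k * (-((2 * n - k) * (2 * n + 1 - k) * (2 * k + 1)) /
        ((4 * n - 1 - 2 * k) * (k + 1) * (k + 2))) := by
  have hodd : (4 * n - 1 - 2 * k : ℚ) ≠ 0 := by
    rw [sub_sub, sub_ne_zero]
    exact_mod_cast (by omega : 4 * n ≠ 1 + 2 * k)
  have := ascPochhammer_eval_neg_two_mul_add_half_ne_zero n k
  have := (ascPochhammer_pos k (2 : ℚ) two_pos).ne'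
  have : (k.factorial : ℚ) ≠ 0 := by positivity
  have : -(2 * n : ℚ) + 1 / 2 + k ≠ 0 := by contrapose! hodd; linear_combination -2 * hodd
  unfold hgTerm
  simp only [ascPochhammer_succ_eval, Nat.factorial_succ, Nat.cast_mul, Nat.cast_succ]
  rw [div_mul_div_comm, div_eq_div_iff (by positivity) (by positivity)]
  ring

theorem hgTerm_succ_left (n k : ℕ) (hk : k ≤ 2 * n) :
    hgTerm (n + 1) k =
      hgTerm n k * ((2 * n + 1) * (2 * n + 2) ^ 2 * (2 * n + 3) * (4 * n + 1 - 2 * k) *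
        (4 * n + 3 - 2 * k) / ((2 * n + 1 - k) * (2 * n + 2 - k) ^ 2 * (2 * n + 3 - k) *
          (4 * n + 1) * (4 * n + 3))) := by
  have hk' : (k : ℚ) ≤ 2 * n := by exact_mod_cast hk
  have h₁ : -(2 * n : ℚ) + k - 2 ≠ 0 := by linarith
  have h₂ : -(2 * n : ℚ) + k - 1 ≠ 0 := by linarith
  have h₃ : -(2 * n : ℚ) - 1 + k - 2 ≠ 0 := by linarith
  have h₄ : -(2 * n : ℚ) - 1 + k - 1 ≠ 0 := by linarith
  have h₅ : -(2 * n : ℚ) + 1 / 2 + k - 2 ≠ 0 := by linarith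
  have h₆ : -(2 * n : ℚ) + 1 / 2 + k - 1 ≠ 0 := by linarith
  have := ascPochhammer_eval_neg_two_mul_add_half_ne_zero n k
  have := (ascPochhammer_pos k (2 : ℚ) two_pos).ne'
  have : (k.factorial : ℚ) ≠ 0 := by positivity
  have : (2 * n + 1 - k : ℚ) ≠ 0 := by linarith
  have : (2 * n + 2 - k : ℚ) ≠ 0 := by linarith
  have : (2 * n + 3 - k : ℚ) ≠ 0 := by linarith
  unfold hgTerm
  rw [Nat.cast_succ, show -(2 * ((n : ℚ) + 1)) = -(2 * n) - 2 by ring,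
    show -(2 * (n : ℚ)) - 2 - 1 = (-(2 * n) - 1) - 2 by ring,
    show -(2 * (n : ℚ)) - 2 + 1 / 2 = (-(2 * n) + 1 / 2) - 2 by ring,
    ascPochhammer_eval_sub_two _ _ h₁ h₂, ascPochhammer_eval_sub_two _ _ h₃ h₄,
    ascPochhammer_eval_sub_two _ _ h₅ h₆]
  generalize (ascPochhammer ℚ k).eval (-(2 * n : ℚ)) = p₁ at *
  generalize (ascPochhammer ℚ k).eval (-(2 * n : ℚ) - 1) = p₂ at *
  generalize (ascPochhammer ℚ k).eval (-(2 * n : ℚ) + 1 / 2) = p₄ at *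
  generalize (ascPochhammer ℚ k).eval 2 = p₅ at *
  field_simp
  rw [div_eq_div_iff (mul_ne_zero (by linarith) (by linarith)) (pow_ne_zero 2 (by linarith))]
  ring

noncomputable def wzCert (n k : ℕ) : ℚ :=
  -((2 * n + 1) * k * (k + 1) * (4 * n + 1 - 2 * k) *
      (2 * n * k ^ 2 + k ^ 2 - 12 * n ^ 2 * k - 20 * n * k - 7 * k + 16 * n ^ 3 + 42 * n ^ 2 +
        32 * n + 6)) /
    ((2 * n + 1 - k) * (2 * n + 2 - k) ^ 2 * (2 * n + 3 - k)) * hgTerm n k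

theorem wzCert_zero (n : ℕ) : wzCert n 0 = 0 := by simp [wzCert]

theorem wz_relation (n k : ℕ) (hk : k < 2 * n) :
    (n + 2) * (4 * n + 1) * (4 * n + 3) * hgTerm (n + 1) k -
        2 * (2 * n + 1) ^ 2 * (2 * n + 3) * hgTerm n k =
      wzCert n (k + 1) - wzCert n k := by
  -- in terms of `d = 2n - 1 - k` every linear factor in a denominator is visibly positive
  obtain ⟨d, hd⟩ : ∃ d, 2 * n = k + 1 + d := ⟨2 * n - (k + 1), by omega⟩
  have hd' : (2 * n : ℚ) = k + 1 + d := by exact_mod_cast hd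
  unfold wzCert
  rw [hgTerm_succ_left n k hk.le, hgTerm_succ_right]
  generalize hgTerm n k = f
  push_cast
  rw [show (2 * n - k : ℚ) = d + 1 by linarith, show (2 * n + 1 - k : ℚ) = d + 2 by linarith,
    show (2 * n + 2 - k : ℚ) = d + 3 by linarith, show (2 * n + 3 - k : ℚ) = d + 4 by linarith,
    show (2 * n + 1 - (k + 1) : ℚ) = d + 1 by linarith,
    show (2 * n + 2 - (k + 1) : ℚ) = d + 2 by linarith,
    show (2 * n + 3 - (k + 1) : ℚ) = d + 3 by linarith,
    show (4 * n - 1 - 2 * k : ℚ) = 2 * d + 1 by linarith,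
    show (4 * n + 1 - 2 * k : ℚ) = 2 * d + 3 by linarith,
    show (4 * n + 3 - 2 * k : ℚ) = 2 * d + 5 by linarith,
    show (4 * n + 1 - 2 * (k + 1) : ℚ) = 2 * d + 1 by linarith]
  field_simp
  rw [show (n : ℚ) = (k + 1 + d) / 2 by linarith]
  ring

-- `R n (2n+1)` has a pole, so the last step `k = 2n` is checked directly, together with the two
-- terms by which the range of `S (n+1)` is longer.
theorem wz_relation_last (n : ℕ) :
    (n + 2) * (4 * n + 1) * (4 * n + 3) *
        (hgTerm (n + 1) (2 * n) + hgTerm (n + 1) (2 * n + 1) + hgTerm (n + 1) (2 * n + 2)) -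
      2 * (2 * n + 1) ^ 2 * (2 * n + 3) * hgTerm n (2 * n) = -wzCert n (2 * n) := by
  rw [hgTerm_succ_right (n + 1) (2 * n + 1), hgTerm_succ_right (n + 1) (2 * n),
    hgTerm_succ_left n (2 * n) le_rfl]
  unfold wzCert
  generalize hgTerm n (2 * n) = f
  push_cast
  ring_nf
  field_simp
  ring

theorem sum_hgTerm_succ (n : ℕ) :
    (n + 2) * (4 * n + 1) * (4 * n + 3) * ∑ k ∈ range (2 * (n + 1) + 1), hgTerm (n + 1) k =
      2 * (2 * n + 1) ^ 2 * (2 * n + 3) * ∑ k ∈ range (2 * n + 1), hgTerm n k := by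
  have htel : ∑ k ∈ range (2 * n), ((n + 2) * (4 * n + 1) * (4 * n + 3) * hgTerm (n + 1) k -
      2 * (2 * n + 1) ^ 2 * (2 * n + 3) * hgTerm n k) = wzCert n (2 * n) := by
    rw [sum_congr rfl fun k hk ↦ wz_relation n k (mem_range.mp hk), sum_range_sub, wzCert_zero,
      sub_zero]
  rw [sum_sub_distrib, ← mul_sum, ← mul_sum] at htel
  rw [show 2 * (n + 1) + 1 = 2 * n + 2 + 1 by ring, sum_range_succ, sum_range_succ,
    sum_range_succ, sum_range_succ]
  linear_combination htel + wz_relation_last n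

def closedForm (n : ℕ) : ℚ :=
  ((Nat.factorial (2 * n + 1) : ℚ) * (Nat.factorial (2 * n) : ℚ) ^ 3) /
    ((Nat.factorial (4 * n) : ℚ) * (Nat.factorial n : ℚ) ^ 3 * (Nat.factorial (n + 1) : ℚ))

theorem closedForm_succ (n : ℕ) :
    (n + 2) * (4 * n + 1) * (4 * n + 3) * closedForm (n + 1) =
      2 * (2 * n + 1) ^ 2 * (2 * n + 3) * closedForm n := by
  unfold closedForm
  simp only [mul_add, Nat.factorial_succ]
  push_cast
  field_simp
  ring

theorem sum_hgTerm_eq_closedForm (n : ℕ) :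
    ∑ k ∈ range (2 * n + 1), hgTerm n k = closedForm n := by
  induction n with
  | zero => simp [hgTerm, closedForm]
  | succ n ih =>
    refine mul_left_cancel₀ (by positivity : ((n : ℚ) + 2) * (4 * n + 1) * (4 * n + 3) ≠ 0) ?_
    rw [sum_hgTerm_succ, closedForm_succ, ih]

theorem stmt_14_general (n : ℕ) :
    ∑ k ∈ Finset.range (2 * n + 1),
      ((ascPochhammer ℚ k).eval (-(2 * n : ℚ)) * (ascPochhammer ℚ k).eval (-(2 * n : ℚ) - 1) *
        (ascPochhammer ℚ k).eval (1 / 2)) /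
      ((ascPochhammer ℚ k).eval (-(2 * n : ℚ) + 1 / 2) * (ascPochhammer ℚ k).eval 2 *
        (Nat.factorial k)) =
    ((Nat.factorial (2 * n + 1) : ℚ) * (Nat.factorial (2 * n) : ℚ) ^ 3) /
      ((Nat.factorial (4 * n) : ℚ) * (Nat.factorial n : ℚ) ^ 3 * (Nat.factorial (n + 1) : ℚ)) :=
  sum_hgTerm_eq_closedForm n

theorem stmt_14 (n : ℕ) (hn : 1 ≤ n) :
    ∑ k ∈ Finset.range (2 * n + 1),
      ((ascPochhammer ℚ k).eval (-(2 * n : ℚ)) * (ascPochhammer ℚ k).eval (-(2 * n : ℚ) - 1) *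
        (ascPochhammer ℚ k).eval (1 / 2)) /
      ((ascPochhammer ℚ k).eval (-(2 * n : ℚ) + 1 / 2) * (ascPochhammer ℚ k).eval 2 *
        (Nat.factorial k)) =
    ((Nat.factorial (2 * n + 1) : ℚ) * (Nat.factorial (2 * n) : ℚ) ^ 3) /
      ((Nat.factorial (4 * n) : ℚ) * (Nat.factorial n : ℚ) ^ 3 * (Nat.factorial (n + 1) : ℚ)) :=
  stmt_14_general n
end

section
/- For every natural number n ≥ 1, the terminating hypergeometric sum ∑_{k=0}^{2n+1} [(-(2n+1))_k (-(2n+2))_k (1/2)_k] / [(-(2n+1)+1/2)_k (2)_k k!] equals 0, where (x)_k is the Pochhammer symbol. -/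
/-- The k-th term of the hypergeometric sum. -/
noncomputable def hypT (n k : ℕ) : ℚ :=
  ((ascPochhammer ℚ k).eval (-(2 * n + 1 : ℚ)) *
      (ascPochhammer ℚ k).eval (-(2 * n + 2 : ℚ)) * (ascPochhammer ℚ k).eval (1 / 2)) /
    ((ascPochhammer ℚ k).eval (-(2 * n + 1 : ℚ) + 1 / 2) * (ascPochhammer ℚ k).eval 2 *
      (Nat.factorial k))

/-- The term ratio. -/
noncomputable def hypR (n : ℕ) (x : ℚ) : ℚ :=
  ((x - (2 * n + 1)) * (x - (2 * n + 2)) * (x + 1 / 2)) /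
    ((x + 1 / 2 - (2 * n + 1)) * (x + 2) * (x + 1))

lemma half_ne (n k : ℕ) : (-(2 * n + 1 : ℚ) + 1 / 2) + k ≠ 0 := by
  intro h
  have h2 : ((2 * k : ℕ) : ℚ) = ((4 * n + 1 : ℕ) : ℚ) := by push_cast; linarith
  have := Nat.cast_injective (R := ℚ) h2
  omega

lemma evalHalf_ne (n k : ℕ) : (ascPochhammer ℚ k).eval (-(2 * n + 1 : ℚ) + 1 / 2) ≠ 0 := by
  induction k with
  | zero => simp
  | succ k ih =>
      rw [ascPochhammer_succ_eval]
      exact mul_ne_zero ih (half_ne n k)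

lemma evalTwo_ne (k : ℕ) : (ascPochhammer ℚ k).eval 2 ≠ 0 :=
  ne_of_gt (ascPochhammer_pos k 2 (by norm_num))

lemma hypT_step (n k : ℕ) : hypT n (k + 1) = hypT n k * hypR n k := by
  have hd := evalHalf_ne n k
  have he := evalTwo_ne k
  have hf : ((Nat.factorial k : ℚ)) ≠ 0 := by positivity
  have h1 := half_ne n k
  have h2 : (k : ℚ) + 2 ≠ 0 := by positivity
  have h3 : (k : ℚ) + 1 ≠ 0 := by positivity
  have h1' : (k : ℚ) + 1 / 2 - (2 * n + 1) ≠ 0 := by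
    intro h; exact h1 (by linarith)
  rw [hypT, hypT, hypR, ascPochhammer_succ_eval, ascPochhammer_succ_eval,
    ascPochhammer_succ_eval, ascPochhammer_succ_eval, ascPochhammer_succ_eval,
    Nat.factorial_succ]
  push_cast
  field_simp
  ring

lemma hypR_mul (n : ℕ) (a b : ℚ) (hab : a + b = 2 * n)
    (ha1 : a + 1 / 2 - (2 * n + 1) ≠ 0) (ha2 : a + 2 ≠ 0) (ha3 : a + 1 ≠ 0)
    (hb1 : b + 1 / 2 - (2 * n + 1) ≠ 0) (hb2 : b + 2 ≠ 0) (hb3 : b + 1 ≠ 0) :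
    hypR n a * hypR n b = 1 := by
  have hb : b = 2 * n - a := by linarith
  subst hb
  rw [hypR, hypR, div_mul_div_comm, div_eq_iff (by
    exact mul_ne_zero (mul_ne_zero (mul_ne_zero ha1 ha2) ha3)
      (mul_ne_zero (mul_ne_zero hb1 hb2) hb3))]
  ring

lemma cast_half_ne' (n : ℕ) (a : ℚ) (h : (-(2 * n + 1 : ℚ) + 1 / 2) + (2 * n - a) ≠ 0) :
    True := trivial

lemma hypT_pair (n : ℕ) : ∀ j, j ≤ n → hypT n (n + 1 + j) = -hypT n (n - j) := by
  intro j
  induction j with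
  | zero =>
      intro _
      simp only [Nat.sub_zero, Nat.add_zero]
      rw [hypT_step]
      have hr : hypR n (n : ℚ) = -1 := by
        rw [hypR]
        have h1 : (n : ℚ) + 1 / 2 - (2 * n + 1) ≠ 0 := by
          intro h; exact half_ne n n (by push_cast; linarith)
        have h2 : (n : ℚ) + 2 ≠ 0 := by positivity
        have h3 : (n : ℚ) + 1 ≠ 0 := by positivity
        rw [div_eq_iff (mul_ne_zero (mul_ne_zero h1 h2) h3)]
        ring
      rw [hr]; ring
  | succ j ih =>
      intro hj
      have hj' : j ≤ n := by omega
      have ihx := ih hj'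
      -- let i = n - (j+1)
      set i := n - (j + 1) with hi
      have hni : n - j = i + 1 := by omega
      have hb : n + 1 + j = 2 * n - i := by omega
      have hcast : (i : ℚ) + ((n : ℚ) + 1 + j) = 2 * n := by
        have : (i : ℕ) + (n + 1 + j) = 2 * n := by omega
        exact_mod_cast congrArg (Nat.cast : ℕ → ℚ) this
      have e2 : hypT n (n + 1 + (j + 1)) = hypT n (n + 1 + j) * hypR n ((n : ℚ) + 1 + j) := by
        have := hypT_step n (n + 1 + j)
        rw [show n + 1 + j + 1 = n + 1 + (j + 1) by omega] at this
        rw [this]; push_cast; ring_nf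
      have e1 : hypT n (n - j) = hypT n i * hypR n (i : ℚ) := by
        rw [hni]; exact hypT_step n i
      rw [e2, ihx, e1]
      have hprod : hypR n (i : ℚ) * hypR n ((n : ℚ) + 1 + j) = 1 := by
        apply hypR_mul n _ _ hcast
        · intro h; exact half_ne n i (by push_cast; linarith)
        · positivity
        · positivity
        · intro h
          have : ((n : ℚ) + 1 + j) + 1 / 2 - (2 * n + 1) = (j : ℚ) + 1 / 2 - n := by ring
          -- b + 1/2 - (2n+1) = -(i + 1/2) since i + b = 2n
          have hz : (i : ℚ) + 1 / 2 = 0 := by linarith [hcast]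
          have : (0 : ℚ) ≤ (i : ℚ) := by positivity
          linarith
        · positivity
        · positivity
      calc -(hypT n i * hypR n (i : ℚ)) * hypR n ((n : ℚ) + 1 + j)
          = -(hypT n i * (hypR n (i : ℚ) * hypR n ((n : ℚ) + 1 + j))) := by ring
        _ = -hypT n i := by rw [hprod]; ring

theorem stmt_15 (n : ℕ) (hn : 1 ≤ n) :
    ∑ k ∈ Finset.range (2 * n + 2),
      ((ascPochhammer ℚ k).eval (-(2 * n + 1 : ℚ)) *
        (ascPochhammer ℚ k).eval (-(2 * n + 2 : ℚ)) * (ascPochhammer ℚ k).eval (1 / 2)) /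
      ((ascPochhammer ℚ k).eval (-(2 * n + 1 : ℚ) + 1 / 2) * (ascPochhammer ℚ k).eval 2 *
        (Nat.factorial k)) = 0 := by
  have hsum : ∑ k ∈ Finset.range (2 * n + 2), hypT n k = 0 := by
    have hsplit : (2 * n + 2) = (n + 1) + (n + 1) := by omega
    rw [hsplit, Finset.sum_range_add]
    have h2 : ∑ i ∈ Finset.range (n + 1), hypT n (n + 1 + i)
        = ∑ i ∈ Finset.range (n + 1), (-hypT n (n - i)) := by
      apply Finset.sum_congr rfl
      intro i hi
      have hi' : i ≤ n := by have := Finset.mem_range.mp hi; omega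
      exact hypT_pair n i hi' 
    rw [h2]
    rw [Finset.sum_neg_distrib]
    have h3 : ∑ i ∈ Finset.range (n + 1), hypT n (n - i)
        = ∑ i ∈ Finset.range (n + 1), hypT n i := by
      have := Finset.sum_range_reflect (fun i => hypT n i) (n + 1)
      simpa using this
    rw [h3]; ring
  simpa [hypT] using hsum
end

section
/- For every natural number n, Cat(n) * ∑_{k=0}^{n} [(-n)_k (-n-1)_k (1/2)_k] / [(-n+1/2)_k (2)_k k!] = ∑_{k=0}^n (-1)^k C(n,k) Cat(k) Cat(n-k), identifying the alternating Catalan convolution with the hypergeometric series Cat(n)·3F2(-n,-n-1,1/2; -n+1/2, 2; 1). -/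
private lemma evalNeg (n : ℕ) : ∀ k : ℕ, k ≤ n →
    (ascPochhammer ℚ k).eval (-(n : ℚ)) =
      (-1) ^ k * n.factorial / (n - k).factorial := by
  intro k
  induction k with
  | zero => simp [Nat.factorial_ne_zero, div_self]
  | succ k ih =>
    intro h
    have hk : k ≤ n := Nat.le_of_succ_le h
    have hm : n - k = (n - (k + 1)) + 1 := by omega
    set m := n - (k + 1) with hmdef
    rw [ascPochhammer_succ_eval, ih hk, hm, Nat.factorial_succ]
    have hc : (-(n : ℚ) + k) = -((m : ℚ) + 1) := by
      have : ((m : ℕ) : ℚ) = (n : ℚ) - (k + 1) := by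
        rw [hmdef]; push_cast [Nat.cast_sub h]; ring
      rw [this]; ring
    rw [hc]
    have h1 : (m.factorial : ℚ) ≠ 0 := Nat.cast_ne_zero.2 (Nat.factorial_ne_zero _)
    have h2 : ((m : ℚ) + 1) ≠ 0 := by positivity
    push_cast
    field_simp
    ring

private lemma evalHalf : ∀ k : ℕ,
    (ascPochhammer ℚ k).eval (1 / 2) =
      (2 * k).factorial / (4 ^ k * k.factorial) := by
  intro k
  induction k with
  | zero => simp
  | succ k ih =>
    rw [ascPochhammer_succ_eval, ih]
    rw [show 2 * (k + 1) = (2 * k + 1) + 1 by ring, Nat.factorial_succ, Nat.factorial_succ,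
      Nat.factorial_succ]
    have h1 : ((2 * k).factorial : ℚ) ≠ 0 := Nat.cast_ne_zero.2 (Nat.factorial_ne_zero _)
    have h2 : (k.factorial : ℚ) ≠ 0 := Nat.cast_ne_zero.2 (Nat.factorial_ne_zero _)
    have h4 : (4 : ℚ) ^ k ≠ 0 := by positivity
    push_cast
    field_simp
    ring

private lemma evalTwo : ∀ k : ℕ,
    (ascPochhammer ℚ k).eval 2 = (k + 1).factorial := by
  intro k
  induction k with
  | zero => simp
  | succ k ih =>
    rw [ascPochhammer_succ_eval, ih]
    have h : (k + 1 + 1).factorial = (k + 1 + 1) * (k + 1).factorial := Nat.factorial_succ _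
    rw [h]
    push_cast
    ring

private lemma evalNegHalf (n : ℕ) : ∀ k : ℕ, k ≤ n →
    (ascPochhammer ℚ k).eval (-(n : ℚ) + 1 / 2) =
      (-1) ^ k * (2 * n).factorial * (n - k).factorial /
        (4 ^ k * n.factorial * (2 * (n - k)).factorial) := by
  intro k
  induction k with
  | zero =>
    intro _
    have h1 : ((2 * n).factorial : ℚ) ≠ 0 := Nat.cast_ne_zero.2 (Nat.factorial_ne_zero _)
    have h2 : (n.factorial : ℚ) ≠ 0 := Nat.cast_ne_zero.2 (Nat.factorial_ne_zero _)
    simp [mul_comm, div_self, h1, h2, mul_ne_zero]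
    field_simp
  | succ k ih =>
    intro h
    have hk : k ≤ n := Nat.le_of_succ_le h
    set m := n - (k + 1) with hm
    have hnk : n - k = m + 1 := by omega
    have h2nk : 2 * (n - k) = (2 * m + 1) + 1 := by omega
    rw [ascPochhammer_succ_eval, ih hk, hnk,
      show 2 * (m + 1) = (2 * m + 1) + 1 by ring, Nat.factorial_succ, Nat.factorial_succ,
      Nat.factorial_succ]
    have h1 : ((2 * m).factorial : ℚ) ≠ 0 := Nat.cast_ne_zero.2 (Nat.factorial_ne_zero _)
    have h2 : (m.factorial : ℚ) ≠ 0 := Nat.cast_ne_zero.2 (Nat.factorial_ne_zero _)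
    have h3 : (n.factorial : ℚ) ≠ 0 := Nat.cast_ne_zero.2 (Nat.factorial_ne_zero _)
    have h4 : (4 : ℚ) ^ k ≠ 0 := by positivity
    have hc : ((m : ℚ)) = (n : ℚ) - (k + 1) := by
      rw [hm]; push_cast [Nat.cast_sub h]; ring
    rw [show (-(n:ℚ) + 1/2 + (k:ℚ)) = -((2*(m:ℚ)+1)/2) by rw [hc]; ring]
    have g1 : (2*(m:ℚ)+1) ≠ 0 := by positivity
    have g2 : (2*(m:ℚ)+2) ≠ 0 := by positivity
    push_cast
    field_simp
    ring

private lemma catCast (n : ℕ) :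
    (catalan n : ℚ) = (2 * n).factorial / (n.factorial * (n + 1).factorial) := by
  have h := succ_mul_catalan_eq_centralBinom n
  have h2 : ((n + 1 : ℕ) : ℚ) * catalan n = ((2*n).choose n : ℚ) := by
    rw [← Nat.centralBinom]; exact_mod_cast congrArg (Nat.cast : ℕ → ℚ) h
  have h3 : ((2*n).choose n : ℚ) = (2*n).factorial / (n.factorial * (2*n - n).factorial) :=
    Nat.cast_choose ℚ (by omega)
  have h4 : 2 * n - n = n := by omega
  rw [h4] at h3
  have h5 : ((n+1).factorial : ℚ) = (n + 1) * n.factorial := by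
    rw [Nat.factorial_succ]; push_cast; ring
  have hn1 : ((n : ℚ) + 1) ≠ 0 := by positivity
  have hf : (n.factorial : ℚ) ≠ 0 := Nat.cast_ne_zero.2 (Nat.factorial_ne_zero _)
  rw [h5]
  rw [h3] at h2
  push_cast at h2 ⊢
  field_simp at h2 ⊢
  linarith [h2]

theorem stmt_16 (n : ℕ) :
    (catalan n : ℚ) *
      ∑ k ∈ Finset.range (n + 1),
        ((ascPochhammer ℚ k).eval (-(n : ℚ)) * (ascPochhammer ℚ k).eval (-(n : ℚ) - 1) *
          (ascPochhammer ℚ k).eval (1 / 2)) /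
        ((ascPochhammer ℚ k).eval (-(n : ℚ) + 1 / 2) * (ascPochhammer ℚ k).eval 2 *
          (Nat.factorial k)) =
    ∑ k ∈ Finset.range (n + 1),
      (-1 : ℚ) ^ k * (n.choose k) * (catalan k) * (catalan (n - k)) := by
  rw [Finset.mul_sum]
  refine Finset.sum_congr rfl fun k hk => ?_
  have hkn : k ≤ n := by
    have := Finset.mem_range.1 hk; omega
  have e1 : -(n : ℚ) - 1 = -((n + 1 : ℕ) : ℚ) := by push_cast; ring
  rw [e1, evalNeg n k hkn, evalNeg (n+1) k (by omega), evalHalf k, evalTwo k,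
    evalNegHalf n k hkn, catCast n, catCast k, catCast (n - k),
    Nat.cast_choose ℚ hkn]
  have hs : (n + 1) - k = (n - k) + 1 := by omega
  rw [hs]
  have f1 : (n.factorial : ℚ) ≠ 0 := Nat.cast_ne_zero.2 (Nat.factorial_ne_zero _)
  have f2 : ((n+1).factorial : ℚ) ≠ 0 := Nat.cast_ne_zero.2 (Nat.factorial_ne_zero _)
  have f3 : ((n-k).factorial : ℚ) ≠ 0 := Nat.cast_ne_zero.2 (Nat.factorial_ne_zero _)
  have f4 : ((n-k+1).factorial : ℚ) ≠ 0 := Nat.cast_ne_zero.2 (Nat.factorial_ne_zero _)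
  have f5 : (k.factorial : ℚ) ≠ 0 := Nat.cast_ne_zero.2 (Nat.factorial_ne_zero _)
  have f6 : ((k+1).factorial : ℚ) ≠ 0 := Nat.cast_ne_zero.2 (Nat.factorial_ne_zero _)
  have f7 : ((2*n).factorial : ℚ) ≠ 0 := Nat.cast_ne_zero.2 (Nat.factorial_ne_zero _)
  have f8 : ((2*k).factorial : ℚ) ≠ 0 := Nat.cast_ne_zero.2 (Nat.factorial_ne_zero _)
  have f9 : ((2*(n-k)).factorial : ℚ) ≠ 0 := Nat.cast_ne_zero.2 (Nat.factorial_ne_zero _)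
  have f10 : (4 : ℚ) ^ k ≠ 0 := by positivity
  have f11 : ((-1 : ℚ)) ^ k ≠ 0 := by
    apply pow_ne_zero; norm_num
  field_simp
end

section
/- Let f be a sequence of rationals with f(0) = 1 and n(n+2) f(n) = 16 (n-1)^2 f(n-2) for all n ≥ 2, and f(1) = 0. Then f(2n) = Cat(n) * C(2n,n) and f(2n+1) = 0 for all natural numbers n, where Cat(n) = C(2n,n)/(n+1). -/
theorem stmt_19 (f : ℕ → ℚ) (h0 : f 0 = 1) (h1 : f 1 = 0)
    (hrec : ∀ n : ℕ, 2 ≤ n → (n : ℚ) * ((n : ℚ) + 2) * f n = 16 * ((n : ℚ) - 1) ^ 2 * f (n - 2)) :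
    ∀ n : ℕ, f (2 * n) = (catalan n : ℚ) * ((2 * n).choose n) ∧ f (2 * n + 1) = 0 := by
  intro n
  induction n with
  | zero => simp [h0, h1]
  | succ n ih =>
    obtain ⟨ihe, iho⟩ := ih
    have hb : ((2 * n).choose n : ℚ) = (n.centralBinom : ℚ) := rfl
    have hb' : ((2 * (n+1)).choose (n+1) : ℚ) = ((n+1).centralBinom : ℚ) := rfl
    have hA : ((n : ℚ) + 1) * catalan n = n.centralBinom := by
      exact_mod_cast congrArg (Nat.cast : ℕ → ℚ) (succ_mul_catalan_eq_centralBinom n)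
    have hB : ((n : ℚ) + 2) * catalan (n+1) = (n+1).centralBinom := by
      have := congrArg (Nat.cast : ℕ → ℚ) (succ_mul_catalan_eq_centralBinom (n+1))
      push_cast at this ⊢
      linarith
    have hC : ((n : ℚ) + 1) * (n+1).centralBinom = 2 * (2 * n + 1) * n.centralBinom := by
      have := congrArg (Nat.cast : ℕ → ℚ) (Nat.succ_mul_centralBinom_succ n)
      push_cast at this ⊢
      linarith
    have hn1 : ((n : ℚ) + 1) ≠ 0 := by positivity
    have hD : ((n+1).centralBinom : ℚ) = 2 * (2 * n + 1) * catalan n := by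
      apply mul_left_cancel₀ hn1
      rw [hC]
      linear_combination (-(2*(2*(n:ℚ)+1))) * hA
    constructor
    · -- even case
      have hE := hrec (2 * n + 2) (by omega)
      have hidx : 2 * n + 2 - 2 = 2 * n := by omega
      rw [hidx, ihe] at hE
      push_cast at hE
      have hcoef : ((2 * (n : ℚ) + 2) * ((2 * n + 2) + 2)) ≠ 0 := by positivity
      have hG : (2 * (n : ℚ) + 2) * ((2 * n + 2) + 2) * ((catalan (n+1) : ℚ) * ((2 * (n+1)).choose (n+1))) =
          16 * ((2 * n + 2 : ℚ) - 1) ^ 2 * ((catalan n : ℚ) * ((2 * n).choose n)) := by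
        rw [hb, hb']
        linear_combination (4*((n:ℚ)+1)*((n+1).centralBinom : ℚ)) * hB
          + (4*((n:ℚ)+1)*(((n+1).centralBinom : ℚ) + 2*(2*(n:ℚ)+1)*(catalan n : ℚ))) * hD
          + (16*(2*(n:ℚ)+1)^2*(catalan n : ℚ)) * hA
      have : f (2 * (n + 1)) = (catalan (n+1) : ℚ) * ((2 * (n+1)).choose (n+1)) := by
        apply mul_left_cancel₀ hcoef
        have h2 : (2 : ℕ) * (n + 1) = 2 * n + 2 := by ring
        rw [h2]
        calc (2 * (n:ℚ) + 2) * ((2 * n + 2) + 2) * f (2 * n + 2)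
            = 16 * ((2 * n + 2 : ℚ) - 1) ^ 2 * ((catalan n : ℚ) * ((2 * n).choose n)) := by
              linarith [hE]
          _ = _ := hG.symm
      exact this
    · -- odd case
      have hE := hrec (2 * n + 3) (by omega)
      have hidx : 2 * n + 3 - 2 = 2 * n + 1 := by omega
      rw [hidx, iho, mul_zero] at hE
      push_cast at hE
      have hcoef : ((2 * (n : ℚ) + 3) * ((2 * n + 3) + 2)) ≠ 0 := by positivity
      have h2 : 2 * (n + 1) + 1 = 2 * n + 3 := by ring
      rw [h2]
      have := mul_eq_zero.mp (by linarith [hE] : (2 * (n:ℚ) + 3) * ((2 * n + 3) + 2) * f (2 * n + 3) = 0)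
      rcases this with h | h
      · exact absurd h hcoef
      · exact h
end
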